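/- arXiv:1507.01631 — 7 statements merged into one kernel-verified Lean document; each statement's English description precedes it below -/
import Mathlib

section
/- For any nonempty measurable set S ⊆ ℝ², 4·λ₂(S) ≤ λ₂(S − S), where S − S = {s₁ − s₂ : s₁, s₂ ∈ S}. -/
open MeasureTheory Pointwise Set ENNReal

/-!
Write `f x = λ₁(T_x)` and `g u = λ₁(D_u)` for the vertical slices of `T ⊆ ℝ²` and of (a measurable
hull `D` of) `T - T`. The one-dimensional inequality `λ₁(B) + λ₁(C) ≤ λ₁(B - C)` (translate compact
`K ⊆ B`, `L ⊆ C` so that `K - max L` and `max K - L` meet in one point) applied to slices gives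
`f x₁ + f x₂ ≤ g (x₁ - x₂)`, so the superlevel set `{2f > t}` has its difference set inside
`{g > t}`. Applying the one-dimensional inequality once more, `2 λ₁{2f > t} ≤ λ₁{g > t}`, and
integrating over `t` (layer cake) gives `4 λ₂(T) = 2 ∫ 2f ≤ ∫ g = λ₂(T - T)`.
-/

theorem Real.volume_add_volume_le_volume_sub_of_isCompact {K L : Set ℝ} (hK : IsCompact K)
    (hL : IsCompact L) (hK₀ : K.Nonempty) (hL₀ : L.Nonempty) :
    volume K + volume L ≤ volume (K - L) := by
  set k := sSup K
  set l := sSup L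
  have hk : k ∈ K := hK.sSup_mem hK₀
  have hl : l ∈ L := hL.sSup_mem hL₀
  set U := (· + l) ⁻¹' K
  set V := (k - ·) ⁻¹' L
  have hU : U ⊆ K - L := fun x hx => ⟨x + l, hx, l, hl, add_sub_cancel_right x l⟩
  have hV : V ⊆ K - L := fun x hx => ⟨k, hk, k - x, hx, sub_sub_cancel k x⟩
  have hUle : U ⊆ Iic (k - l) := fun x hx => by
    have := le_csSup hK.bddAbove hx
    rw [mem_Iic]; linarith
  have hVge : V ⊆ Ici (k - l) := fun x hx => by
    have := le_csSup hL.bddAbove hx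
    rw [mem_Ici]; linarith
  have hUV : AEDisjoint volume U V := by
    refine measure_mono_null (fun x hx => ?_) (measure_singleton (k - l))
    exact le_antisymm (hUle hx.1) (hVge hx.2)
  have hVm : MeasurableSet V := hL.measurableSet.preimage (measurable_const.sub measurable_id)
  calc volume K + volume L = volume U + volume V := by
        rw [show volume U = volume K from measure_preimage_add_right volume l K,
          show volume V = volume L from
            (Measure.measurePreserving_sub_left volume k).measure_preimage
              hL.measurableSet.nullMeasurableSet]
    _ = volume (U ∪ V) := (measure_union₀ hVm.nullMeasurableSet hUV).symm
    _ ≤ volume (K - L) := measure_mono (union_subset hU hV)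

theorem Real.volume_add_volume_le_volume_sub {B C : Set ℝ} (hB : MeasurableSet B)
    (hC : MeasurableSet C) (hB₀ : B.Nonempty) (hC₀ : C.Nonempty) :
    volume B + volume C ≤ volume (B - C) := by
  obtain ⟨b, hb⟩ := hB₀
  obtain ⟨c, hc⟩ := hC₀
  rw [hB.measure_eq_iSup_isCompact, hC.measure_eq_iSup_isCompact]
  simp only [iSup_and']
  refine ENNReal.biSup_add_biSup_le' ⟨∅, empty_subset _, isCompact_empty⟩
    ⟨∅, empty_subset _, isCompact_empty⟩ fun K ⟨hKB, hK⟩ L ⟨hLC, hL⟩ => ?_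
  calc volume K + volume L ≤ volume (insert b K) + volume (insert c L) := by
        gcongr <;> exact subset_insert _ _
    _ ≤ volume (insert b K - insert c L) :=
        volume_add_volume_le_volume_sub_of_isCompact (hK.insert b) (hL.insert c)
          (insert_nonempty b K) (insert_nonempty c L)
    _ ≤ volume (B - C) :=
        measure_mono (sub_subset_sub (insert_subset hb hKB) (insert_subset hc hLC))

theorem Real.two_mul_volume_le_volume_sub_self {A : Set ℝ} (hA : MeasurableSet A) :
    2 * volume A ≤ volume (A - A) := by
  rcases A.eq_empty_or_nonempty with rfl | hA₀
  · simp
  · rw [two_mul]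
    exact volume_add_volume_le_volume_sub hA hA hA₀ hA₀

theorem Real.volume_restrict_Ioi_setOf_ofReal_lt (a : ℝ≥0∞) :
    volume.restrict (Ioi 0) {t : ℝ | ENNReal.ofReal t < a} = a := by
  rw [Measure.restrict_apply' measurableSet_Ioi]
  rcases eq_or_ne a ∞ with rfl | ha
  · simp
  · have : {t : ℝ | ENNReal.ofReal t < a} ∩ Ioi 0 = Ioo 0 a.toReal := by
      ext t
      simp +contextual [ENNReal.ofReal_lt_iff_lt_toReal, ha, le_of_lt, and_comm]
    rw [this, Real.volume_Ioo, sub_zero, ofReal_toReal ha]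

theorem lintegral_measure_setOf_ofReal_lt {α : Type*} [MeasurableSpace α] (μ : Measure α)
    [SFinite μ] {h : α → ℝ≥0∞} (hh : Measurable h) :
    ∫⁻ t in Ioi 0, μ {x | ENNReal.ofReal t < h x} = ∫⁻ x, h x ∂μ := by
  have hE : MeasurableSet {p : ℝ × α | ENNReal.ofReal p.1 < h p.2} :=
    measurableSet_lt (ENNReal.measurable_ofReal.comp measurable_fst) (hh.comp measurable_snd)
  calc ∫⁻ t in Ioi 0, μ {x | ENNReal.ofReal t < h x}
      = (volume.restrict (Ioi 0)).prod μ {p : ℝ × α | ENNReal.ofReal p.1 < h p.2} :=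
        (Measure.prod_apply hE).symm
    _ = ∫⁻ x, volume.restrict (Ioi 0) {t : ℝ | ENNReal.ofReal t < h x} ∂μ :=
        Measure.prod_apply_symm hE
    _ = ∫⁻ x, h x ∂μ := by simp only [Real.volume_restrict_Ioi_setOf_ofReal_lt]

theorem preimage_prodMk_sub_preimage_prodMk_subset {α β : Type*} [Sub α] [Sub β]
    (T : Set (α × β)) (x₁ x₂ : α) :
    Prod.mk x₁ ⁻¹' T - Prod.mk x₂ ⁻¹' T ⊆ Prod.mk (x₁ - x₂) ⁻¹' (T - T) := by
  rintro _ ⟨b, hb, c, hc, rfl⟩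
  exact ⟨(x₁, b), hb, (x₂, c), hc, rfl⟩

theorem volume_slice_add_volume_slice_le {T : Set (ℝ × ℝ)} (hT : MeasurableSet T) {x₁ x₂ : ℝ}
    (h₁ : volume (Prod.mk x₁ ⁻¹' T) ≠ 0) (h₂ : volume (Prod.mk x₂ ⁻¹' T) ≠ 0) :
    volume (Prod.mk x₁ ⁻¹' T) + volume (Prod.mk x₂ ⁻¹' T) ≤
      volume (Prod.mk (x₁ - x₂) ⁻¹' (T - T)) :=
  (Real.volume_add_volume_le_volume_sub (hT.preimage measurable_prodMk_left)
    (hT.preimage measurable_prodMk_left) (nonempty_of_measure_ne_zero h₁)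
    (nonempty_of_measure_ne_zero h₂)).trans
    (measure_mono (preimage_prodMk_sub_preimage_prodMk_subset T x₁ x₂))

theorem four_mul_volume_le_volume_sub_self {T : Set (ℝ × ℝ)} (hT : MeasurableSet T) :
    4 * volume T ≤ volume (T - T) := by
  -- `T - T` need not be measurable, and Fubini needs a measurable set.
  set D := toMeasurable volume (T - T)
  have hD : MeasurableSet D := measurableSet_toMeasurable _ _
  set f : ℝ → ℝ≥0∞ := fun x => volume (Prod.mk x ⁻¹' T)
  set g : ℝ → ℝ≥0∞ := fun u => volume (Prod.mk u ⁻¹' D)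
  have hf : Measurable f := measurable_measure_prodMk_left hT
  have hg : Measurable g := measurable_measure_prodMk_left hD
  have hsuper : ∀ t : ℝ, {x | ENNReal.ofReal t < 2 * f x} - {x | ENNReal.ofReal t < 2 * f x} ⊆
      {u | ENNReal.ofReal t < g u} := by
    rintro t _ ⟨x₁, hx₁, x₂, hx₂, rfl⟩
    have hlt : ENNReal.ofReal t < f x₁ + f x₂ := by
      rcases le_total (f x₁) (f x₂) with h | h
      · exact hx₁.trans_le (by rw [two_mul]; gcongr)
      · exact hx₂.trans_le (by rw [two_mul]; gcongr)
    refine hlt.trans_le ((volume_slice_add_volume_slice_le hT ?_ ?_).trans ?_)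
    · exact fun h => by simp [f, h] at hx₁
    · exact fun h => by simp [f, h] at hx₂
    · exact measure_mono (preimage_mono (subset_toMeasurable _ _))
  have hvolT : volume T = ∫⁻ x, f x := by rw [Measure.volume_eq_prod, Measure.prod_apply hT]
  have hvolD : volume D = ∫⁻ u, g u := by rw [Measure.volume_eq_prod, Measure.prod_apply hD]
  calc 4 * volume T = 2 * ∫⁻ x, 2 * f x := by
        rw [hvolT, lintegral_const_mul 2 hf, ← mul_assoc]
        norm_num
    _ = 2 * ∫⁻ t in Ioi 0, volume {x | ENNReal.ofReal t < 2 * f x} := by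
        rw [lintegral_measure_setOf_ofReal_lt _ (hf.const_mul 2)]
    _ = ∫⁻ t in Ioi 0, 2 * volume {x | ENNReal.ofReal t < 2 * f x} :=
        (lintegral_const_mul' 2 _ ofNat_ne_top).symm
    _ ≤ ∫⁻ t in Ioi 0, volume {u | ENNReal.ofReal t < g u} := by
        refine lintegral_mono fun t => ?_
        exact (Real.two_mul_volume_le_volume_sub_self (measurableSet_lt measurable_const
          (hf.const_mul 2))).trans (measure_mono (hsuper t))
    _ = volume D := by rw [lintegral_measure_setOf_ofReal_lt _ hg, hvolD]
    _ = volume (T - T) := measure_toMeasurable _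

theorem four_mul_volume_le_volume_diff_general (S : Set (EuclideanSpace ℝ (Fin 2)))
    (hm : MeasurableSet S) :
    4 * volume S ≤ volume (S - S) := by
  let e : EuclideanSpace ℝ (Fin 2) ≃ᵐ ℝ × ℝ :=
    (MeasurableEquiv.toLp 2 (Fin 2 → ℝ)).symm.trans MeasurableEquiv.finTwoArrow
  have he : MeasurePreserving e :=
    (volume_preserving_finTwoArrow ℝ).comp
      (EuclideanSpace.volume_preserving_symm_measurableEquiv_toLp (Fin 2))
  have hvol : ∀ A, volume (e '' A) = volume A := fun A => by
    rw [e.image_eq_preimage_symm, (he.symm e).measure_preimage_equiv]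
  have himage : e '' (S - S) = e '' S - e '' S := image_image2_distrib fun _ _ => rfl
  calc 4 * volume S = 4 * volume (e '' S) := by rw [hvol]
    _ ≤ volume (e '' S - e '' S) :=
        four_mul_volume_le_volume_sub_self (e.measurableSet_image.mpr hm)
    _ = volume (S - S) := by rw [← himage, hvol]

theorem four_mul_volume_le_volume_diff (S : Set (EuclideanSpace ℝ (Fin 2)))
    (hne : S.Nonempty) (hm : MeasurableSet S) :
    4 * volume S ≤ volume (S - S) :=
  four_mul_volume_le_volume_diff_general S hm
end

section
/- Every closed disk in ℝ² of diameter at most 4/√3 is a T(3,2)-set: among any three points of the disk, at least two are at distance ≤ 2. -/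
open Metric Real RealInnerProductSpace

def IsT32Set (S : Set (EuclideanSpace ℝ (Fin 2))) : Prop :=
  ∀ p ∈ S, ∀ q ∈ S, ∀ r ∈ S, dist p q ≤ 2 ∨ dist q r ≤ 2 ∨ dist p r ≤ 2

theorem closedBall_isT32 (c : EuclideanSpace ℝ (Fin 2)) (r : ℝ)
    (hr : 2 * r ≤ 4 / Real.sqrt 3) :
    IsT32Set (Metric.closedBall c r) := by
  intro p hp q hq s hs
  simp only [Metric.mem_closedBall, dist_eq_norm] at hp hq hs
  have hr0 : 0 ≤ r := le_trans (norm_nonneg _) hp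
  have h3 : (0:ℝ) < Real.sqrt 3 := Real.sqrt_pos.mpr (by norm_num)
  have hsq : Real.sqrt 3 ^ 2 = 3 := Real.sq_sqrt (by norm_num)
  have hr2 : 3 * r ^ 2 ≤ 4 := by
    have h4 : Real.sqrt 3 * (4 / Real.sqrt 3) = 4 := mul_div_cancel₀ _ h3.ne'
    have h5 := mul_le_mul_of_nonneg_left hr h3.le
    rw [h4] at h5
    nlinarith [mul_nonneg h3.le hr0]
  set u := p - c with hu
  set v := q - c with hv
  set w := s - c with hw
  have key : (0:ℝ) ≤ ⟪u + v + w, u + v + w⟫ := real_inner_self_nonneg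
  have kex : ⟪u + v + w, u + v + w⟫
      = ‖u‖^2 + ‖v‖^2 + ‖w‖^2 + 2*⟪u,v⟫ + 2*⟪u,w⟫ + 2*⟪v,w⟫ := by
    simp only [inner_add_left, inner_add_right, real_inner_self_eq_norm_sq]
    rw [real_inner_comm v u, real_inner_comm w u, real_inner_comm w v]
    ring
  rw [kex] at key
  have huv : ‖u - v‖^2 = ‖u‖^2 - 2*⟪u,v⟫ + ‖v‖^2 := norm_sub_sq_real u v
  have hvw : ‖v - w‖^2 = ‖v‖^2 - 2*⟪v,w⟫ + ‖w‖^2 := norm_sub_sq_real v w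
  have huw : ‖u - w‖^2 = ‖u‖^2 - 2*⟪u,w⟫ + ‖w‖^2 := norm_sub_sq_real u w
  have dpq : dist p q = ‖u - v‖ := by rw [dist_eq_norm]; congr 1; simp [hu, hv]
  have dqs : dist q s = ‖v - w‖ := by rw [dist_eq_norm]; congr 1; simp [hv, hw]
  have dps : dist p s = ‖u - w‖ := by rw [dist_eq_norm]; congr 1; simp [hu, hw]
  rw [dpq, dqs, dps]
  by_contra hcon
  push_neg at hcon
  obtain ⟨h1, h2, h3'⟩ := hcon
  nlinarith [norm_nonneg (u - v), norm_nonneg (v - w), norm_nonneg (u - w),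
    norm_nonneg u, norm_nonneg v, norm_nonneg w, sq_nonneg (‖u-v‖), hp, hq, hs]
end

section
/- Let S ⊆ ℝ² be a measurable T(3,2)-set whose diameter is at least 4. Then λ₂(S) ≤ 2π. -/
open MeasureTheory Metric Real

/-!
The closure of `S` is a compact T(3,2)-set, so it contains `p, q` with `dist p q ≥ 4`. Applying the
T(3,2) condition to triples `x, q, y` shows that the points farther than `2` from `q` form a set of
diameter `≤ 2`, and likewise for `p`; by strict convexity only the midpoint of `pq` lies in neither
set. Each of the two sets has area at most `π` by the planar isodiametric inequality, proved in
polar coordinates around a lowest point of the closure: the area is `∫ ρ(θ)² / 2` over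
`θ ∈ [0, π]`, and Pythagoras gives `ρ(θ)² + ρ(θ + π/2)² ≤ 4` for the radial function `ρ`.
-/

open Set Module Bornology
open scoped ENNReal

theorem isBounded_of_diam_pos {α : Type*} [PseudoMetricSpace α] {s : Set α} (h : 0 < diam s) :
    IsBounded s :=
  by_contra fun hs => h.ne' (diam_eq_zero_of_unbounded hs)

theorem nonempty_of_diam_pos {α : Type*} [PseudoMetricSpace α] {s : Set α} (h : 0 < diam s) :
    s.Nonempty :=
  nonempty_iff_ne_empty.2 fun hs => h.ne' (by simp [hs])

theorem IsCompact.exists_dist_eq_diam {α : Type*} [PseudoMetricSpace α] {K : Set α}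
    (hK : IsCompact K) (hne : K.Nonempty) : ∃ p ∈ K, ∃ q ∈ K, dist p q = diam K := by
  obtain ⟨⟨p, q⟩, ⟨hp, hq⟩, hmax⟩ :=
    (hK.prod hK).exists_isMaxOn (hne.prod hne) continuous_dist.continuousOn
  refine ⟨p, hp, q, hq, le_antisymm (dist_le_diam_of_mem hK.isBounded hp hq) ?_⟩
  exact diam_le_of_forall_dist_le dist_nonneg fun x hx y hy => hmax (mk_mem_prod hx hy)

theorem eq_midpoint_of_dist_le {E : Type*} [NormedAddCommGroup E] [NormedSpace ℝ E]
    [StrictConvexSpace ℝ E] {p q x : E} {δ : ℝ} (hp : dist p x ≤ δ) (hq : dist x q ≤ δ)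
    (hpq : 2 * δ ≤ dist p q) : x = midpoint ℝ p q := by
  have := dist_triangle p x q
  exact eq_midpoint_of_dist_eq_half (by linarith) (by linarith)

theorem subset_union_union_midpoint {E : Type*} [NormedAddCommGroup E] [NormedSpace ℝ E]
    [StrictConvexSpace ℝ E] (K : Set E) {p q : E} {δ : ℝ} (hpq : 2 * δ ≤ dist p q) :
    K ⊆ {x ∈ K | δ < dist x q} ∪ {x ∈ K | δ < dist x p} ∪ {midpoint ℝ p q} := by
  intro x hx
  by_cases hxq : δ < dist x q
  · exact Or.inl (Or.inl ⟨hx, hxq⟩)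
  by_cases hxp : δ < dist x p
  · exact Or.inl (Or.inr ⟨hx, hxp⟩)
  rw [not_lt, dist_comm] at hxp
  exact Or.inr (eq_midpoint_of_dist_le hxp (not_lt.1 hxq) hpq)

theorem setLIntegral_Ico_le_of_add_le {g : ℝ → ℝ≥0∞} {a : ℝ} {c : ℝ≥0∞} (ha : 0 ≤ a)
    (h : ∀ θ ∈ Ico 0 a, g θ + g (θ + a) ≤ c) :
    ∫⁻ θ in Ico 0 (2 * a), g θ ≤ c * ENNReal.ofReal a := by
  have hshift : ∫⁻ θ in Ico a (2 * a), g θ = ∫⁻ θ in Ico 0 a, g (θ + a) := by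
    rw [← (measurePreserving_add_right volume a).setLIntegral_comp_preimage_emb
      (Homeomorph.addRight a).measurableEmbedding, preimage_add_const_Ico]
    ring_nf
  calc ∫⁻ θ in Ico 0 (2 * a), g θ
      = (∫⁻ θ in Ico 0 a, g θ) + ∫⁻ θ in Ico 0 a, g (θ + a) := by
        rw [← Ico_union_Ico_eq_Ico ha (by linarith), lintegral_union measurableSet_Ico
          Ico_disjoint_Ico_same, hshift]
    _ ≤ ∫⁻ θ in Ico 0 a, (g θ + g (θ + a)) := le_lintegral_add _ _
    _ ≤ ∫⁻ _ in Ico 0 a, c := setLIntegral_mono' measurableSet_Ico h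
    _ = c * ENNReal.ofReal a := by simp

theorem lintegral_Ioi_ofReal_mul_indicator_le {t : Set ℝ} {ρ : ℝ} (hρ : 0 ≤ ρ)
    (ht : ∀ s ∈ t, 0 < s → s ≤ ρ) :
    ∫⁻ s in Ioi 0, ENNReal.ofReal s * t.indicator 1 s ≤ ENNReal.ofReal (ρ ^ 2 / 2) := by
  have hpointwise (s : ℝ) :
      ENNReal.ofReal s * t.indicator 1 s ≤ (Ioc 0 ρ).indicator ENNReal.ofReal s := by
    by_cases hs : 0 < s
    · by_cases hst : s ∈ t
      · simp [hst, hs, ht s hst hs]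
      · simp [hst]
    · simp [ENNReal.ofReal_of_nonpos (not_lt.1 hs)]
  calc ∫⁻ s in Ioi 0, ENNReal.ofReal s * t.indicator 1 s
      ≤ ∫⁻ s, (Ioc 0 ρ).indicator ENNReal.ofReal s :=
        (setLIntegral_le_lintegral _ _).trans (lintegral_mono hpointwise)
    _ = ENNReal.ofReal (∫ s in (0)..ρ, s) := by
        rw [lintegral_indicator measurableSet_Ioc, intervalIntegral.integral_of_le hρ,
          ofReal_integral_eq_lintegral_ofReal (f := fun s => s) continuous_id.integrableOn_Ioc]
        filter_upwards [ae_restrict_mem measurableSet_Ioc] with s hs using hs.1.le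
    _ = ENNReal.ofReal (ρ ^ 2 / 2) := by simp [integral_id]

namespace Complex

theorem polarCoord_symm_im (s θ : ℝ) : (Complex.polarCoord.symm (s, θ)).im = s * Real.sin θ := by
  simp [sin_ofReal_re, cos_ofReal_re]

theorem dist_polarCoord_symm_add_pi_div_two_sq (s t θ : ℝ) :
    dist (Complex.polarCoord.symm (s, θ)) (Complex.polarCoord.symm (t, θ + π / 2)) ^ 2 =
      s ^ 2 + t ^ 2 := by
  rw [dist_eq_re_im, Real.sq_sqrt (by positivity)]
  simp [Real.cos_add_pi_div_two, Real.sin_add_pi_div_two, sin_ofReal_re, cos_ofReal_re]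
  linear_combination (s ^ 2 + t ^ 2) * Real.sin_sq_add_cos_sq θ

@[fun_prop]
theorem continuous_polarCoord_symm : Continuous Complex.polarCoord.symm := by
  simp only [funext Complex.polarCoord_symm_apply]
  fun_prop

theorem volume_eq_lintegral_polarCoord {A : Set ℂ} (hA : MeasurableSet A) :
    volume A = ∫⁻ θ in Ioo (-π) π, ∫⁻ s in Ioi 0,
      ENNReal.ofReal s * A.indicator 1 (Complex.polarCoord.symm (s, θ)) := by
  rw [← lintegral_indicator_one hA, ← Complex.lintegral_comp_polarCoord_symm, polarCoord_target,
    Measure.volume_eq_prod, ← Measure.prod_restrict, lintegral_prod_symm]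
  · rfl
  · exact (ENNReal.measurable_ofReal.comp measurable_fst).smul
      ((measurable_const.indicator hA).comp continuous_polarCoord_symm.measurable) |>.aemeasurable

noncomputable def radialFunction (K : Set ℂ) (θ : ℝ) : ℝ :=
  sSup {s : ℝ | 0 ≤ s ∧ Complex.polarCoord.symm (s, θ) ∈ K}

section radialFunction

variable {K : Set ℂ} {r : ℝ}

theorem bddAbove_radialFunction_set (h0 : 0 ∈ K) (hd : ∀ x ∈ K, ∀ y ∈ K, dist x y ≤ 2 * r)
    (θ : ℝ) :
    BddAbove {s : ℝ | 0 ≤ s ∧ Complex.polarCoord.symm (s, θ) ∈ K} :=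
  ⟨2 * r, fun s ⟨hs, hsK⟩ => by simpa [abs_of_nonneg hs] using hd _ hsK 0 h0⟩

theorem le_radialFunction (h0 : 0 ∈ K) (hd : ∀ x ∈ K, ∀ y ∈ K, dist x y ≤ 2 * r) {s θ : ℝ}
    (hs : 0 ≤ s) (hsK : Complex.polarCoord.symm (s, θ) ∈ K) : s ≤ radialFunction K θ :=
  le_csSup (bddAbove_radialFunction_set h0 hd θ) ⟨hs, hsK⟩

theorem radialFunction_mem (hK : IsClosed K) (h0 : 0 ∈ K)
    (hd : ∀ x ∈ K, ∀ y ∈ K, dist x y ≤ 2 * r) (θ : ℝ) :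
    0 ≤ radialFunction K θ ∧ Complex.polarCoord.symm (radialFunction K θ, θ) ∈ K := by
  have hclosed : IsClosed {s : ℝ | 0 ≤ s ∧ Complex.polarCoord.symm (s, θ) ∈ K} :=
    isClosed_Ici.inter (hK.preimage (by fun_prop))
  exact hclosed.csSup_mem ⟨0, le_rfl, by simpa⟩ (bddAbove_radialFunction_set h0 hd θ)

theorem radialFunction_sq_add_sq_le (hK : IsClosed K) (h0 : 0 ∈ K)
    (hd : ∀ x ∈ K, ∀ y ∈ K, dist x y ≤ 2 * r) (θ : ℝ) :
    radialFunction K θ ^ 2 + radialFunction K (θ + π / 2) ^ 2 ≤ (2 * r) ^ 2 := by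
  rw [← dist_polarCoord_symm_add_pi_div_two_sq]
  exact pow_le_pow_left₀ dist_nonneg
    (hd _ (radialFunction_mem hK h0 hd θ).2 _ (radialFunction_mem hK h0 hd _).2) 2

end radialFunction

theorem volume_le_of_zero_mem_of_im_nonneg {K : Set ℂ} {r : ℝ} (hK : IsClosed K) (h0 : 0 ∈ K)
    (him : ∀ z ∈ K, 0 ≤ z.im) (hd : ∀ x ∈ K, ∀ y ∈ K, dist x y ≤ 2 * r) :
    volume K ≤ ENNReal.ofReal (π * r ^ 2) := by
  set f : ℝ → ℝ≥0∞ := fun θ => ∫⁻ s in Ioi 0,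
    ENNReal.ofReal s * K.indicator 1 (Complex.polarCoord.symm (s, θ))
  have hlower : ∫⁻ θ in Ioo (-π) 0, f θ = 0 := by
    refine (setLIntegral_congr_fun measurableSet_Ioo (g := 0) fun θ hθ => ?_).trans lintegral_zero
    refine nonpos_iff_eq_zero.1 ((lintegral_Ioi_ofReal_mul_indicator_le le_rfl ?_).trans (by simp))
    intro s hsK hs
    have := him _ hsK
    rw [polarCoord_symm_im] at this
    nlinarith [Real.sin_neg_of_neg_of_neg_pi_lt hθ.2 hθ.1]
  have hupper (θ : ℝ) : f θ ≤ ENNReal.ofReal (radialFunction K θ ^ 2 / 2) :=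
    lintegral_Ioi_ofReal_mul_indicator_le (radialFunction_mem hK h0 hd θ).1
      fun s hsK hs => le_radialFunction h0 hd hs.le hsK
  calc volume K = ∫⁻ θ in Ioo (-π) 0 ∪ Ico 0 π, f θ := by
        rw [Ioo_union_Ico_eq_Ioo (by linarith [pi_pos]) pi_pos.le]
        exact volume_eq_lintegral_polarCoord hK.measurableSet
    _ ≤ (∫⁻ θ in Ioo (-π) 0, f θ) + ∫⁻ θ in Ico 0 (2 * (π / 2)), f θ := by
        rw [mul_div_cancel₀ _ two_ne_zero]
        exact lintegral_union_le _ _ _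
    _ ≤ 0 + ∫⁻ θ in Ico 0 (2 * (π / 2)), ENNReal.ofReal (radialFunction K θ ^ 2 / 2) := by
        rw [hlower]
        gcongr with θ
        exact hupper θ
    _ ≤ ENNReal.ofReal (2 * r ^ 2) * ENNReal.ofReal (π / 2) := by
        rw [zero_add]
        refine setLIntegral_Ico_le_of_add_le (by positivity) fun θ _ => ?_
        rw [← ENNReal.ofReal_add (by positivity) (by positivity)]
        exact ENNReal.ofReal_le_ofReal (by linarith [radialFunction_sq_add_sq_le hK h0 hd θ])
    _ = ENNReal.ofReal (π * r ^ 2) := by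
        rw [← ENNReal.ofReal_mul (by positivity)]
        ring_nf

theorem volume_le_of_forall_dist_le {A : Set ℂ} {r : ℝ}
    (hA : ∀ x ∈ A, ∀ y ∈ A, dist x y ≤ 2 * r) : volume A ≤ ENNReal.ofReal (π * r ^ 2) := by
  rcases A.eq_empty_or_nonempty with rfl | hne
  · simp
  have hbdd : IsBounded A := isBounded_iff.2 ⟨2 * r, hA⟩
  have hcl : ∀ x ∈ closure A, ∀ y ∈ closure A, dist x y ≤ 2 * r := by
    obtain ⟨a, ha⟩ := hne
    have hdiam : diam A ≤ 2 * r :=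
      diam_le_of_forall_dist_le ((dist_self a).symm.trans_le (hA a ha a ha)) hA
    exact fun x hx y hy => (dist_le_diam_of_mem hbdd.closure hx hy).trans
      ((diam_closure A).trans_le hdiam)
  obtain ⟨O, hO, hmin⟩ :=
    hbdd.isCompact_closure.exists_isMinOn hne.closure continuous_im.continuousOn
  calc volume A ≤ volume (closure A) := measure_mono subset_closure
    _ = volume ((· + O) ⁻¹' closure A) := (measure_preimage_add_right _ _ _).symm
    _ ≤ ENNReal.ofReal (π * r ^ 2) :=
        volume_le_of_zero_mem_of_im_nonneg (isClosed_closure.preimage (continuous_add_const O))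
          (by simpa using hO) (fun z hz => by simpa using hmin hz)
          (fun x hx y hy => by simpa using hcl _ hx _ hy)

end Complex

theorem volume_le_of_forall_dist_le_of_finrank_eq_two {E : Type*} [NormedAddCommGroup E]
    [InnerProductSpace ℝ E] [FiniteDimensional ℝ E] [MeasurableSpace E] [BorelSpace E]
    (hE : finrank ℝ E = 2) {A : Set E} {r : ℝ} (hA : ∀ x ∈ A, ∀ y ∈ A, dist x y ≤ 2 * r) :
    volume A ≤ ENNReal.ofReal (π * r ^ 2) := by
  let f : E ≃ₗᵢ[ℝ] ℂ :=
    ((stdOrthonormalBasis ℝ E).reindex (finCongr hE)).repr.trans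
      Complex.orthonormalBasisOneI.repr.symm
  calc volume A = volume (f ⁻¹' (f '' A)) := by rw [f.injective.preimage_image]
    _ = volume (f '' A) :=
        f.measurePreserving.measure_preimage_emb f.toHomeomorph.measurableEmbedding _
    _ ≤ ENNReal.ofReal (π * r ^ 2) := Complex.volume_le_of_forall_dist_le <| by
        rintro _ ⟨x, hx, rfl⟩ _ ⟨y, hy, rfl⟩
        simpa using hA x hx y hy

theorem IsT32Set.closure {S : Set (EuclideanSpace ℝ (Fin 2))} (hS : IsT32Set S) :
    IsT32Set (closure S) := by
  let T : Set (EuclideanSpace ℝ (Fin 2) × EuclideanSpace ℝ (Fin 2) × EuclideanSpace ℝ (Fin 2)) :=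
    {t | dist t.1 t.2.1 ≤ 2} ∪ ({t | dist t.2.1 t.2.2 ≤ 2} ∪ {t | dist t.1 t.2.2 ≤ 2})
  have hT : IsClosed T := by
    refine (isClosed_le ?_ continuous_const).union ((isClosed_le ?_ continuous_const).union
      (isClosed_le ?_ continuous_const)) <;> fun_prop
  have hST : S ×ˢ S ×ˢ S ⊆ T := fun t ht => hS _ ht.1 _ ht.2.1 _ ht.2.2
  have hsub := closure_minimal hST hT
  rw [closure_prod_eq, closure_prod_eq] at hsub
  intro p hp q hq r hr
  have hpqr := hsub (mk_mem_prod hp (mk_mem_prod hq hr))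
  simpa only [T, mem_union, mem_ofPred_eq] using hpqr

theorem IsT32Set.dist_le_of_two_lt_dist {S : Set (EuclideanSpace ℝ (Fin 2))} (hS : IsT32Set S)
    {x y q : EuclideanSpace ℝ (Fin 2)} (hx : x ∈ S) (hy : y ∈ S) (hq : q ∈ S)
    (hxq : 2 < dist x q) (hyq : 2 < dist y q) : dist x y ≤ 2 := by
  rw [dist_comm y] at hyq
  exact ((hS x hx q hq y hy).resolve_left hxq.not_ge).resolve_left hyq.not_ge

theorem T32_large_diam_measure_bound_general (S : Set (EuclideanSpace ℝ (Fin 2)))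
    (hT : IsT32Set S) (hdiam : 4 ≤ Metric.diam S) :
    volume S ≤ ENNReal.ofReal (2 * π) := by
  have hpos : 0 < diam S := by linarith
  set K := closure S
  have hK : IsT32Set K := hT.closure
  obtain ⟨p, hp, q, hq, hpq⟩ :=
    (isBounded_of_diam_pos hpos).isCompact_closure.exists_dist_eq_diam
      (nonempty_of_diam_pos hpos).closure
  rw [diam_closure] at hpq
  have hpiece : ∀ c ∈ K, volume {x ∈ K | 2 < dist x c} ≤ ENNReal.ofReal π := fun c hc => by
    simpa using volume_le_of_forall_dist_le_of_finrank_eq_two finrank_euclideanSpace_fin (r := 1)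
      fun x hx y hy => by simpa using hK.dist_le_of_two_lt_dist hx.1 hy.1 hc hx.2 hy.2
  calc volume S ≤ volume K := measure_mono subset_closure
    _ ≤ volume {x ∈ K | 2 < dist x q} + volume {x ∈ K | 2 < dist x p} +
          volume {midpoint ℝ p q} :=
        (measure_mono (subset_union_union_midpoint K (by linarith))).trans <|
          (measure_union_le _ _).trans (add_le_add_left (measure_union_le _ _) _)
    _ ≤ ENNReal.ofReal π + ENNReal.ofReal π + 0 := by
        gcongr
        exacts [hpiece q hq, hpiece p hp, (measure_singleton _).le]
    _ = ENNReal.ofReal (2 * π) := by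
        rw [add_zero, ← ENNReal.ofReal_add pi_pos.le pi_pos.le, two_mul]

theorem T32_large_diam_measure_bound (S : Set (EuclideanSpace ℝ (Fin 2)))
    (hm : MeasurableSet S) (hT : IsT32Set S) (hdiam : 4 ≤ Metric.diam S) :
    volume S ≤ ENNReal.ofReal (2 * π) :=
  T32_large_diam_measure_bound_general S hT hdiam
end

section
/- (Jung's theorem in the plane) If S ⊆ ℝ² is a bounded set with diameter δ, then S is contained in some closed disk of radius δ/√3. -/
open Metric Real RealInnerProductSpace

/-!
By Helly's theorem it suffices to cover any three points of `S`: the closed balls of radius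
`δ / √3` around the points of `S` are compact and convex, so in the plane they have a common point
as soon as any three of them do. If the triangle formed by three points has a right or obtuse
angle, the midpoint of the opposite side lies within half of that side of all three points. If it
is acute, its largest angle `α` lies in `[π/3, π/2)`, so the circumcenter works: the circumradius
is `(longest side) / (2 sin α) ≤ δ / √3`.
-/

/-- For the triangle spanned by vectors `u, v` with `p = ‖u‖²`, `q = ‖v‖²`, `s = ⟪u, v⟫`, the left
side is the squared circumradius; the hypotheses say that the triangle is acute and that its squared
sides are at most `d`. -/
theorem circumradius_sq_le {p q s d : ℝ} (hs : 0 < s) (hsp : s < p) (hsq : s < q)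
    (hp : p ≤ d) (hq : q ≤ d) (hr : p + q - 2 * s ≤ d) :
    p * q * (p + q - 2 * s) / (4 * (p * q - s ^ 2)) ≤ d / 3 := by
  obtain ⟨x, hx, rfl⟩ : ∃ x, 0 < x ∧ p = s + x := ⟨p - s, by linarith, by ring⟩
  obtain ⟨y, hy, rfl⟩ : ∃ y, 0 < y ∧ q = s + y := ⟨q - s, by linarith, by ring⟩
  rw [div_le_div_iff₀ (by nlinarith) (by norm_num)]
  -- The three weights add up to `4 (p q - s²)`, and weighting the bounds on the squared sides
  -- by them gives exactly `3 p q (p + q - 2 s)`.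
  linear_combination mul_le_mul_of_nonneg_left hr (by positivity : 0 ≤ 2 * x * y + s * x + s * y) +
    mul_le_mul_of_nonneg_left hp (by positivity : 0 ≤ x * y + 2 * s * x + s * y) +
    mul_le_mul_of_nonneg_left hq (by positivity : 0 ≤ x * y + s * x + 2 * s * y)

section
variable {E : Type*} [NormedAddCommGroup E] [InnerProductSpace ℝ E]

/-- The formula is `R = abc / (4 · area)`, with `(2 · area)² = ‖u‖² ‖v‖² - ⟪u, v⟫²`. -/
theorem exists_norm_sq_eq_circumradius_sq (u v : E) (h : ⟪u, v⟫ ^ 2 < ‖u‖ ^ 2 * ‖v‖ ^ 2) :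
    ∃ w : E, ‖w‖ ^ 2 = ‖u‖ ^ 2 * ‖v‖ ^ 2 * ‖u - v‖ ^ 2 / (4 * (‖u‖ ^ 2 * ‖v‖ ^ 2 - ⟪u, v⟫ ^ 2)) ∧
      ‖w - u‖ = ‖w‖ ∧ ‖w - v‖ = ‖w‖ := by
  rw [norm_sub_sq_real]
  generalize hp : ‖u‖ ^ 2 = p at h ⊢
  generalize hq : ‖v‖ ^ 2 = q at h ⊢
  generalize hs : ⟪u, v⟫ = s at h ⊢
  set D := 4 * (p * q - s ^ 2)
  have hD : D ≠ 0 := by positivity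
  -- Cramer's rule for `⟪w, u⟫ = ‖u‖² / 2`, `⟪w, v⟫ = ‖v‖² / 2`, i.e. equidistance from `0, u, v`.
  obtain ⟨w, hw⟩ : ∃ w : E, w = D⁻¹ • ((2 * q * (p - s)) • u + (2 * p * (q - s)) • v) := ⟨_, rfl⟩
  have hwu : ⟪w, u⟫ = ‖u‖ ^ 2 / 2 := by
    calc ⟪w, u⟫ = D⁻¹ * (2 * q * (p - s) * ‖u‖ ^ 2 + 2 * p * (q - s) * ⟪v, u⟫) := by
          rw [hw, real_inner_smul_left, inner_add_left, real_inner_smul_left,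
            real_inner_smul_left, real_inner_self_eq_norm_sq]
      _ = D⁻¹ * (D * (‖u‖ ^ 2 / 2)) := by rw [real_inner_comm, hs, hp]; ring
      _ = ‖u‖ ^ 2 / 2 := inv_mul_cancel_left₀ hD _
  have hwv : ⟪w, v⟫ = ‖v‖ ^ 2 / 2 := by
    calc ⟪w, v⟫ = D⁻¹ * (2 * q * (p - s) * ⟪u, v⟫ + 2 * p * (q - s) * ‖v‖ ^ 2) := by
          rw [hw, real_inner_smul_left, inner_add_left, real_inner_smul_left,
            real_inner_smul_left, real_inner_self_eq_norm_sq]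
      _ = D⁻¹ * (D * (‖v‖ ^ 2 / 2)) := by rw [hs, hq]; ring
      _ = ‖v‖ ^ 2 / 2 := inv_mul_cancel_left₀ hD _
  have equidistant {z : E} (hz : ⟪w, z⟫ = ‖z‖ ^ 2 / 2) : ‖w - z‖ = ‖w‖ := by
    rw [← sq_eq_sq₀ (norm_nonneg _) (norm_nonneg _), norm_sub_sq_real, hz]
    ring
  refine ⟨w, ?_, equidistant hwu, equidistant hwv⟩
  calc ‖w‖ ^ 2 = D⁻¹ * (2 * q * (p - s) * ⟪w, u⟫ + 2 * p * (q - s) * ⟪w, v⟫) := by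
        rw [← real_inner_self_eq_norm_sq]
        nth_rewrite 2 [hw]
        rw [real_inner_smul_right, inner_add_right, real_inner_smul_right, real_inner_smul_right]
    _ = p * q * (p - 2 * s + q) / D := by rw [hwu, hwv, hp, hq]; ring

theorem triple_subset_closedBall_midpoint_of_inner_nonpos {a b c : E} (h : ⟪b - a, c - a⟫ ≤ 0) :
    {a, b, c} ⊆ closedBall (midpoint ℝ b c) (dist b c / 2) := by
  have ha : dist a (midpoint ℝ b c) ≤ dist b c / 2 := by
    have hsum : ‖(b - a) + (c - a)‖ ≤ ‖(b - a) - (c - a)‖ := by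
      rw [← sq_le_sq₀ (norm_nonneg _) (norm_nonneg _), norm_add_sq_real (b - a),
        norm_sub_sq_real (b - a)]
      linarith
    have hmid : midpoint ℝ b c - a = (2 : ℝ)⁻¹ • ((b - a) + (c - a)) := by
      rw [midpoint_eq_smul_add, invOf_eq_inv]
      module
    rw [sub_sub_sub_cancel_right] at hsum
    rw [dist_comm, dist_eq_norm, hmid, norm_smul, dist_eq_norm]
    simp only [norm_inv, RCLike.norm_ofNat]
    linarith
  simp only [Set.insert_subset_iff, Set.singleton_subset_iff, mem_closedBall, ha, true_and]
  simp [dist_left_midpoint, dist_right_midpoint, div_eq_inv_mul]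

theorem exists_triple_subset_closedBall_of_acute {a b c : E} {δ : ℝ}
    (hA : 0 < ⟪b - a, c - a⟫) (hB : 0 < ⟪a - b, c - b⟫) (hC : 0 < ⟪a - c, b - c⟫)
    (hab : dist a b ≤ δ) (hac : dist a c ≤ δ) (hbc : dist b c ≤ δ) :
    ∃ x, {a, b, c} ⊆ closedBall x (δ / √3) := by
  obtain ⟨u, rfl⟩ : ∃ u, b = a + u := ⟨b - a, by abel⟩
  obtain ⟨v, rfl⟩ : ∃ v, c = a + v := ⟨c - a, by abel⟩
  simp only [add_sub_cancel_left, sub_add_cancel_left, add_sub_add_left_eq_sub,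
    dist_self_add_right, dist_add_left] at hA hB hC hab hac hbc
  rw [dist_eq_norm] at hbc
  have hδ : 0 ≤ δ := (norm_nonneg _).trans hab
  have hsp : ⟪u, v⟫ < ‖u‖ ^ 2 := by
    rw [inner_neg_left, inner_sub_right, real_inner_self_eq_norm_sq] at hB
    linarith
  have hsq : ⟪u, v⟫ < ‖v‖ ^ 2 := by
    rw [inner_neg_left, inner_sub_right, real_inner_self_eq_norm_sq, real_inner_comm] at hC
    linarith
  obtain ⟨w, hw, hwu, hwv⟩ := exists_norm_sq_eq_circumradius_sq u v
    (by nlinarith [mul_lt_mul'' hsp hsq hA.le hA.le])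
  have hR : ‖w‖ ≤ δ / √3 := by
    have hr : ‖u - v‖ ^ 2 = ‖u‖ ^ 2 + ‖v‖ ^ 2 - 2 * ⟪u, v⟫ := by rw [norm_sub_sq_real]; ring
    rw [← sq_le_sq₀ (norm_nonneg _) (by positivity), hw, hr, div_pow, sq_sqrt zero_le_three]
    exact circumradius_sq_le hA hsp hsq (pow_le_pow_left₀ (norm_nonneg _) hab 2)
      (pow_le_pow_left₀ (norm_nonneg _) hac 2) (hr ▸ pow_le_pow_left₀ (norm_nonneg _) hbc 2)
  refine ⟨a + w, ?_⟩
  simp only [Set.insert_subset_iff, Set.singleton_subset_iff, mem_closedBall, dist_add_left,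
    dist_self_add_right]
  rw [dist_eq_norm, dist_eq_norm, norm_sub_rev u, norm_sub_rev v, hwu, hwv]
  exact ⟨hR, hR, hR⟩

theorem exists_triple_subset_closedBall_div_sqrt_three {a b c : E} {δ : ℝ}
    (hab : dist a b ≤ δ) (hac : dist a c ≤ δ) (hbc : dist b c ≤ δ) :
    ∃ x, {a, b, c} ⊆ closedBall x (δ / √3) := by
  have half_le {x y : E} (hxy : dist x y ≤ δ) : dist x y / 2 ≤ δ / √3 := by
    have hδ : 0 ≤ δ := dist_nonneg.trans hxy
    calc dist x y / 2 ≤ δ / 2 := by gcongr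
      _ ≤ δ / √3 := by
        gcongr
        exact Real.sqrt_le_iff.mpr ⟨by norm_num, by norm_num⟩
  by_cases hA : ⟪b - a, c - a⟫ ≤ 0
  · exact ⟨_, (triple_subset_closedBall_midpoint_of_inner_nonpos hA).trans
      (closedBall_subset_closedBall (half_le hbc))⟩
  by_cases hB : ⟪a - b, c - b⟫ ≤ 0
  · refine ⟨midpoint ℝ a c, Set.Subset.trans ?_ (closedBall_subset_closedBall (half_le hac))⟩
    simpa only [Set.insert_comm b a] using triple_subset_closedBall_midpoint_of_inner_nonpos hB
  by_cases hC : ⟪a - c, b - c⟫ ≤ 0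
  · refine ⟨midpoint ℝ a b, Set.Subset.trans ?_ (closedBall_subset_closedBall (half_le hab))⟩
    simpa only [Set.insert_comm c a, Set.pair_comm c b]
      using triple_subset_closedBall_midpoint_of_inner_nonpos hC
  exact exists_triple_subset_closedBall_of_acute (not_le.1 hA) (not_le.1 hB) (not_le.1 hC)
    hab hac hbc

end

theorem exists_subset_closedBall_of_forall_finset {E : Type*} [NormedAddCommGroup E]
    [NormedSpace ℝ E] [FiniteDimensional ℝ E] {S : Set E} {r : ℝ}
    (h : ∀ T : Finset E, (T : Set E) ⊆ S → T.card ≤ Module.finrank ℝ E + 1 →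
      ∃ x, (T : Set E) ⊆ closedBall x r) :
    ∃ x, S ⊆ closedBall x r := by
  obtain ⟨x, hx⟩ := Convex.helly_theorem_compact' (𝕜 := ℝ)
    (F := fun y : S ↦ closedBall (y : E) r) (fun _ ↦ convex_closedBall _ _)
    (fun _ ↦ isCompact_closedBall _ _) fun I hI ↦ by
      obtain ⟨x, hx⟩ := h (I.map (Function.Embedding.subtype _)) (by simp) (by simpa using hI)
      exact ⟨x, Set.mem_iInter₂.2 fun y hy ↦ mem_closedBall_comm.1 (hx (by simpa using hy))⟩
  exact ⟨x, fun y hy ↦ mem_closedBall_comm.1 (Set.mem_iInter.1 hx ⟨y, hy⟩)⟩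

theorem Finset.Nonempty.exists_eq_triple {α : Type*} [DecidableEq α] {T : Finset α}
    (hT : T.Nonempty) (h : T.card ≤ 3) : ∃ a b c, T = {a, b, c} := by
  have : 1 ≤ T.card := hT.card_pos
  interval_cases hc : T.card
  · obtain ⟨a, rfl⟩ := Finset.card_eq_one.1 hc
    exact ⟨a, a, a, by simp⟩
  · obtain ⟨a, b, -, rfl⟩ := Finset.card_eq_two.1 hc
    exact ⟨a, b, b, by simp⟩
  · obtain ⟨a, b, c, -, -, -, rfl⟩ := Finset.card_eq_three.1 hc
    exact ⟨a, b, c, rfl⟩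

theorem jung_plane (S : Set (EuclideanSpace ℝ (Fin 2))) (δ : ℝ)
    (hb : Bornology.IsBounded S) (hdiam : Metric.diam S = δ) :
    ∃ c : EuclideanSpace ℝ (Fin 2), S ⊆ Metric.closedBall c (δ / Real.sqrt 3) := by
  subst hdiam
  refine exists_subset_closedBall_of_forall_finset fun T hTS hT ↦ ?_
  rw [finrank_euclideanSpace_fin] at hT
  classical
  rcases T.eq_empty_or_nonempty with rfl | hne
  · exact ⟨0, by simp⟩
  obtain ⟨a, b, c, rfl⟩ := hne.exists_eq_triple hT
  simp only [Finset.coe_insert, Finset.coe_singleton, Set.insert_subset_iff,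
    Set.singleton_subset_iff] at hTS
  obtain ⟨haS, hbS, hcS⟩ := hTS
  push_cast
  exact exists_triple_subset_closedBall_div_sqrt_three (dist_le_diam_of_mem hb haS hbS)
    (dist_le_diam_of_mem hb haS hcS) (dist_le_diam_of_mem hb hbS hcS)
end

section
/- Fix r > 2/√3 and let C(r) be the circle of radius r centered at the origin in ℝ². If B ⊆ C(r) is a measurable T(3,2)-set, then the 1-dimensional Lebesgue (arc-length) measure of B is at most (2/3)·2πr. -/
open MeasureTheory Metric Real
open scoped ENNReal NNReal

open Complex Set in
lemma normSq_circleMap_sub (r θ s : ℝ) :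
    Complex.normSq (circleMap 0 r θ - circleMap 0 r (θ + s)) = r ^ 2 * (2 - 2 * Real.cos s) := by
  simp only [circleMap_zero, Complex.normSq_apply, Complex.sub_re, Complex.sub_im,
    Complex.mul_re, Complex.mul_im, Complex.ofReal_re, Complex.ofReal_im,
    Complex.exp_ofReal_mul_I_re, Complex.exp_ofReal_mul_I_im]
  rw [Real.cos_add, Real.sin_add]
  linear_combination (r^2 * ((1 - Real.cos s)^2 + Real.sin s^2)) * (Real.sin_sq_add_cos_sq θ)
    + r^2 * (Real.sin_sq_add_cos_sq s)

lemma triple_bound {t u : Set ℝ} (s I : Set ℝ) (ht : MeasurableSet t) (hu : MeasurableSet u)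
    (hsI : s ⊆ I) (htI : t ⊆ I) (huI : u ⊆ I) (h : s ∩ t ∩ u = ∅) :
    volume s + volume t + volume u ≤ 2 * volume I := by
  have h1 : volume s + volume t = volume (s ∪ t) + volume (s ∩ t) :=
    (measure_union_add_inter s ht).symm
  have h2 : volume (s ∩ t) + volume u = volume ((s ∩ t) ∪ u) + volume ((s ∩ t) ∩ u) :=
    (measure_union_add_inter _ hu).symm
  rw [h1, add_assoc, h2, h, measure_empty, add_zero]
  have hA : volume (s ∪ t) ≤ volume I := measure_mono (Set.union_subset hsI htI)
  have hB : volume ((s ∩ t) ∪ u) ≤ volume I :=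
    measure_mono (Set.union_subset ((Set.inter_subset_left).trans hsI) huI)
  calc volume (s ∪ t) + volume ((s ∩ t) ∪ u) ≤ volume I + volume I := add_le_add hA hB
    _ = 2 * volume I := (two_mul _).symm

theorem circle_T32_bound (r : ℝ) (hr : 2 / Real.sqrt 3 < r)
    (B : Set (EuclideanSpace ℝ (Fin 2))) (hm : MeasurableSet B)
    (hB : B ⊆ Metric.sphere (0 : EuclideanSpace ℝ (Fin 2)) r)
    (hT : IsT32Set B) :
    μH[1] B ≤ ENNReal.ofReal ((2 / 3) * (2 * π * r)) := by
  have hs3 : (0:ℝ) < Real.sqrt 3 := by positivity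
  have hr0 : (0:ℝ) < r := lt_trans (by positivity) hr
  have hr2 : 4 / 3 < r ^ 2 := by
    have h1 : (2 / Real.sqrt 3) ^ 2 < r ^ 2 := by
      exact pow_lt_pow_left₀ hr (by positivity) (by norm_num)
    calc (4:ℝ)/3 = (2 / Real.sqrt 3) ^ 2 := by
          rw [div_pow, Real.sq_sqrt (by norm_num : (3:ℝ) ≥ 0)]; norm_num
      _ < r ^ 2 := h1
  set e := Complex.orthonormalBasisOneI.repr with he
  set g : ℝ → EuclideanSpace ℝ (Fin 2) := fun θ => e (circleMap 0 r θ) with hg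
  -- g is Lipschitz with constant |r|
  have hlip : LipschitzWith (Real.nnabs r) g := by
    intro x y
    have := lipschitzWith_circleMap 0 r x y
    simpa [hg, e.isometry.edist_eq] using this
  -- key distance estimate
  have key : ∀ θ s : ℝ, Real.cos s = -(1/2) → ¬ dist (g θ) (g (θ + s)) ≤ 2 := by
    intro θ s hcos hle
    have hd : dist (g θ) (g (θ + s)) = dist (circleMap 0 r θ) (circleMap 0 r (θ + s)) :=
      e.isometry.dist_eq _ _
    have hsq : dist (circleMap 0 r θ) (circleMap 0 r (θ + s)) ^ 2 = 3 * r ^ 2 := by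
      rw [Complex.dist_eq, Complex.sq_norm, normSq_circleMap_sub, hcos]; ring
    have h4 : (4:ℝ) < dist (circleMap 0 r θ) (circleMap 0 r (θ + s)) ^ 2 := by
      rw [hsq]; nlinarith
    rw [hd] at hle
    nlinarith [dist_nonneg (x := circleMap 0 r θ) (y := circleMap 0 r (θ + s))]
  have hcos1 : Real.cos (2 * π / 3) = -(1/2) := by
    have : (2:ℝ) * π / 3 = π - π / 3 := by ring
    rw [this, Real.cos_pi_sub, Real.cos_pi_div_three]
  have hcos2 : Real.cos (2 * (2 * π / 3)) = -(1/2) := by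
    have h : (2:ℝ) * (2 * π / 3) = 2 * π - (2 * π / 3) := by ring
    rw [h, Real.cos_two_pi_sub, hcos1]
  set c : ℝ := 2 * π / 3 with hc
  have hc0 : 0 < c := by positivity
  set A : Set ℝ := g ⁻¹' B ∩ Set.Ioc 0 (2 * π) with hA
  have hgm : Measurable g :=
    (e.continuous.comp (continuous_circleMap 0 r)).measurable
  have hAm : MeasurableSet (g ⁻¹' B) := hgm hm
  -- B ⊆ g '' A
  have hBsub : B ⊆ g '' A := by
    intro x hx
    have hxs : e.symm x ∈ Metric.sphere (0:ℂ) |r| := by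
      have : dist (e.symm x) (e.symm 0) = dist x 0 := e.symm.isometry.dist_eq _ _
      simp only [map_zero] at this
      rw [mem_sphere_iff_norm, sub_zero, ← dist_zero_right, this, dist_zero_right,
        abs_of_pos hr0]
      simpa [mem_sphere_iff_norm, sub_zero, ← dist_zero_right] using hB hx
    rw [← image_circleMap_Ioc 0 r] at hxs
    obtain ⟨θ, hθ, hθx⟩ := hxs
    refine ⟨θ, ⟨?_, hθ⟩, ?_⟩
    · show g θ ∈ B
      have : g θ = x := by rw [hg]; simp only [hθx]; exact e.apply_symm_apply x
      rwa [this]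
    · rw [hg]; simp only [hθx]; exact e.apply_symm_apply x
  -- decompose the volume of A
  have hsplit : A = (A ∩ Set.Ioc 0 c) ∪ ((A ∩ Set.Ioc c (2*c)) ∪ (A ∩ Set.Ioc (2*c) (3*c))) := by
    have h3c : 3 * c = 2 * π := by rw [hc]; ring
    ext θ
    simp only [Set.mem_union, Set.mem_inter_iff, Set.mem_Ioc, hA]
    constructor
    · rintro ⟨hθB, h0, h2π⟩
      have h3θ : θ ≤ 3 * c := by rw [h3c]; exact h2π
      rcases le_or_gt θ c with h | h
      · exact Or.inl ⟨⟨hθB, h0, h2π⟩, h0, h⟩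
      rcases le_or_gt θ (2*c) with h' | h'
      · exact Or.inr (Or.inl ⟨⟨hθB, h0, h2π⟩, h, h'⟩)
      · exact Or.inr (Or.inr ⟨⟨hθB, h0, h2π⟩, h', h3θ⟩)
    · rintro (⟨h, _⟩ | ⟨h, _⟩ | ⟨h, _⟩) <;> exact h
  have hAIm : ∀ a b : ℝ, MeasurableSet (A ∩ Set.Ioc a b) := fun a b =>
    (hAm.inter measurableSet_Ioc).inter measurableSet_Ioc
  have d12 : Disjoint (A ∩ Set.Ioc c (2*c)) (A ∩ Set.Ioc (2*c) (3*c)) := by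
    rw [Set.disjoint_left]
    rintro θ ⟨-, -, h1⟩ ⟨-, h2, -⟩
    exact absurd h1 (not_le.2 h2)
  have d0 : Disjoint (A ∩ Set.Ioc 0 c) ((A ∩ Set.Ioc c (2*c)) ∪ (A ∩ Set.Ioc (2*c) (3*c))) := by
    rw [Set.disjoint_left]
    rintro θ ⟨-, -, h1⟩ (⟨-, h2, -⟩ | ⟨-, h2, -⟩)
    · exact absurd h1 (not_le.2 h2)
    · exact absurd h1 (not_le.2 (lt_of_le_of_lt (by linarith [hc0.le] : c ≤ 2*c) h2))
  have hvol : volume A = volume (A ∩ Set.Ioc 0 c) + volume (A ∩ Set.Ioc c (2*c))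
      + volume (A ∩ Set.Ioc (2*c) (3*c)) := by
    conv_lhs => rw [hsplit]
    rw [measure_union d0 ((hAIm _ _).union (hAIm _ _)), measure_union d12 (hAIm _ _), add_assoc]
  -- translate each piece into Ioc 0 c
  have htrans : ∀ k : ℝ, volume (A ∩ Set.Ioc k (k + c))
      = volume ((fun θ => θ + k) ⁻¹' A ∩ Set.Ioc 0 c) := by
    intro k
    have hpre : (fun θ => θ + k) ⁻¹' (A ∩ Set.Ioc k (k + c))
        = (fun θ => θ + k) ⁻¹' A ∩ Set.Ioc 0 c := by
      ext θ
      simp only [Set.mem_preimage, Set.mem_inter_iff, Set.mem_Ioc]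
      constructor
      · rintro ⟨h1, h2, h3⟩; exact ⟨h1, by linarith, by linarith⟩
      · rintro ⟨h1, h2, h3⟩; exact ⟨h1, by linarith, by linarith⟩
    rw [← hpre, measure_preimage_add_right]
  -- the three translated sets
  set s0 : Set ℝ := (fun θ => θ + 0) ⁻¹' A ∩ Set.Ioc 0 c with hs0
  set s1 : Set ℝ := (fun θ => θ + c) ⁻¹' A ∩ Set.Ioc 0 c with hs1
  set s2 : Set ℝ := (fun θ => θ + 2*c) ⁻¹' A ∩ Set.Ioc 0 c with hs2
  have hAsub : A ⊆ g ⁻¹' B := Set.inter_subset_left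
  have hempty : s0 ∩ s1 ∩ s2 = ∅ := by
    rw [Set.eq_empty_iff_forall_notMem]
    rintro θ ⟨⟨⟨h0, -⟩, ⟨h1, -⟩⟩, ⟨h2, -⟩⟩
    have b0 : g (θ + 0) ∈ B := hAsub h0
    have b1 : g (θ + c) ∈ B := hAsub h1
    have b2 : g (θ + 2*c) ∈ B := hAsub h2
    rcases hT _ b0 _ b1 _ b2 with h | h | h
    · exact key θ c hcos1 (by rwa [add_zero] at h)
    · have : θ + 2*c = (θ + c) + c := by ring
      rw [this] at h
      exact key (θ + c) c hcos1 h
    · have : θ + 2*c = θ + 2*(2*π/3) := by rw [hc]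
      rw [add_zero, this] at h
      exact key θ (2*(2*π/3)) hcos2 h
  have hAms : MeasurableSet A := hAm.inter measurableSet_Ioc
  have hs1m : MeasurableSet s1 := ((measurable_add_const c) hAms).inter measurableSet_Ioc
  have hs2m : MeasurableSet s2 := ((measurable_add_const (2*c)) hAms).inter measurableSet_Ioc
  have hvolA : volume A ≤ 2 * volume (Set.Ioc (0:ℝ) c) := by
    rw [hvol]
    have e0 : volume (A ∩ Set.Ioc 0 c) = volume s0 := by
      have : (0:ℝ) = 0 + c - c := by ring
      rw [show Set.Ioc (0:ℝ) c = Set.Ioc 0 (0 + c) by rw [zero_add], htrans 0, hs0]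
    have e1 : volume (A ∩ Set.Ioc c (2*c)) = volume s1 := by
      rw [show Set.Ioc c (2*c) = Set.Ioc c (c + c) by congr 1; ring, htrans c, hs1]
    have e2 : volume (A ∩ Set.Ioc (2*c) (3*c)) = volume s2 := by
      rw [show Set.Ioc (2*c) (3*c) = Set.Ioc (2*c) (2*c + c) by congr 1; ring, htrans (2*c), hs2]
    rw [e0, e1, e2]
    exact triple_bound s0 (Set.Ioc 0 c) hs1m hs2m Set.inter_subset_right
      Set.inter_subset_right Set.inter_subset_right hempty
  -- put everything together
  have hmain : μH[1] B ≤ ENNReal.ofReal r * volume A := by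
    calc μH[1] B ≤ μH[1] (g '' A) := measure_mono hBsub
      _ ≤ (Real.nnabs r : ℝ≥0∞) ^ (1:ℝ) * μH[1] A :=
          hlip.hausdorffMeasure_image_le zero_le_one A
      _ = ENNReal.ofReal r * volume A := by
          rw [MeasureTheory.hausdorffMeasure_real, ENNReal.rpow_one,
            Real.nnabs_of_nonneg hr0.le]
          rfl
  calc μH[1] B ≤ ENNReal.ofReal r * volume A := hmain
    _ ≤ ENNReal.ofReal r * (2 * volume (Set.Ioc (0:ℝ) c)) := by gcongr
    _ = ENNReal.ofReal ((2 / 3) * (2 * π * r)) := by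
        rw [Real.volume_Ioc, sub_zero, (by simp : (2:ℝ≥0∞) = ENNReal.ofReal 2),
          ← ENNReal.ofReal_mul (by norm_num), ← ENNReal.ofReal_mul hr0.le]
        congr 1
        rw [hc]; ring
end

section
/- A triangle of maximal area inscribed in a closed disk of radius ρ is equilateral with side length ρ√3; consequently every triangle contained in a disk of radius ρ has area at most (3√3/4)·ρ². -/
/-!
Put the centre of the disk at the origin. Twice the area of the triangle `a b c` is
`|(b - a) × (c - a)|`, since the triangle is the image of the standard triangle (area `1/2`) under
an affine map with linear part `(b - a, c - a)`. If `R` is the rotation by `2π/3`, then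
`(√3/2)(|a|² + |b|² + |c|²) - (b - a) × (c - a) = (√3/6)|a + b + c|² + (√3/3)|a + R b + R² c|²`,
so the area is at most `(√3/4) · 3ρ²`. Equality needs `a, b, c` on the circle with
`a + R b + R² c = 0`, which is the equilateral triangle.
-/

open MeasureTheory Metric Real Pointwise

noncomputable section

local notation "ℝ²" => EuclideanSpace ℝ (Fin 2)

def cross (u v : ℝ²) : ℝ := u 0 * v 1 - u 1 * v 0

lemma cross_smul_smul (r : ℝ) (u v : ℝ²) : cross (r • u) (r • v) = r ^ 2 * cross u v := by
  simp only [cross, PiLp.smul_apply, smul_eq_mul]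
  ring

def stdTriangle : Set ℝ² := {x | 0 ≤ x 0 ∧ 0 ≤ x 1 ∧ x 0 + x 1 ≤ 1}

lemma convexHull_zero_single_single :
    convexHull ℝ {0, EuclideanSpace.single 0 1, EuclideanSpace.single 1 1} = stdTriangle := by
  apply subset_antisymm
  · refine convexHull_min ?_ ?_
    · rintro x (rfl | rfl | rfl) <;> simp [stdTriangle]
    · rintro x ⟨hx0, hx1, hx⟩ y ⟨hy0, hy1, hy⟩ a b ha hb hab
      simp only [stdTriangle, Set.mem_ofPred_eq, PiLp.add_apply, PiLp.smul_apply, smul_eq_mul]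
      exact ⟨by positivity, by positivity, by nlinarith⟩
  · rintro x ⟨hx0, hx1, hx⟩
    let w : Fin 3 → ℝ := ![1 - x 0 - x 1, x 0, x 1]
    let z : Fin 3 → ℝ² := ![0, EuclideanSpace.single 0 1, EuclideanSpace.single 1 1]
    have hx_eq : x = ∑ i, w i • z i := by
      ext i; fin_cases i <;> simp [w, z, Fin.sum_univ_three]
    rw [hx_eq]
    refine (convex_convexHull ℝ _).sum_mem (fun i _ => ?_) ?_ (fun i _ => subset_convexHull ℝ _ ?_)
    · fin_cases i <;> simp [w] <;> linarith
    · simp only [w, Fin.sum_univ_three, Matrix.cons_val]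
      ring
    · fin_cases i <;> simp [z]

open intervalIntegral in
lemma volume_prod_triangle :
    volume {p : ℝ × ℝ | 0 ≤ p.1 ∧ 0 ≤ p.2 ∧ p.1 + p.2 ≤ 1} = ENNReal.ofReal (1 / 2) := by
  set T := {p : ℝ × ℝ | 0 ≤ p.1 ∧ 0 ≤ p.2 ∧ p.1 + p.2 ≤ 1}
  have hmeas : MeasurableSet T := by measurability
  have hslice (x : ℝ) :
      volume (Prod.mk x ⁻¹' T) = (Set.Icc 0 1).indicator (fun x => ENNReal.ofReal (1 - x)) x := by
    by_cases hx : x ∈ Set.Icc 0 1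
    · rw [Set.indicator_of_mem hx, ← sub_zero (1 - x), ← Real.volume_Icc]
      congr 1
      ext y
      simp only [T, Set.mem_preimage, Set.mem_ofPred_eq, Set.mem_Icc]
      constructor
      · rintro ⟨-, hy, hxy⟩
        exact ⟨hy, by linarith⟩
      · rintro ⟨hy, hxy⟩
        exact ⟨hx.1, hy, by linarith⟩
    · have hempty : Prod.mk x ⁻¹' T = ∅ :=
        Set.eq_empty_of_forall_notMem fun y ⟨hx0, hy, hxy⟩ => hx ⟨hx0, by linarith⟩
      rw [Set.indicator_of_notMem hx, hempty, measure_empty]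
  rw [Measure.volume_eq_prod, Measure.prod_apply hmeas]
  simp_rw [hslice]
  rw [lintegral_indicator measurableSet_Icc, ← ofReal_integral_eq_lintegral_ofReal,
    integral_Icc_eq_integral_Ioc, ← integral_of_le zero_le_one,
    integral_sub intervalIntegrable_const intervalIntegral.intervalIntegrable_id]
  · norm_num
  · exact (continuous_const.sub continuous_id).integrableOn_Icc
  · filter_upwards [ae_restrict_mem measurableSet_Icc] with x hx
    simp only [Pi.zero_apply]
    linarith [hx.2]

lemma volume_stdTriangle : volume stdTriangle = ENNReal.ofReal (1 / 2) := by
  have hmp : MeasurePreserving (fun x : ℝ² => (x 0, x 1)) :=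
    (volume_preserving_finTwoArrow ℝ).comp
      (EuclideanSpace.volume_preserving_symm_measurableEquiv_toLp _)
  rw [← volume_prod_triangle, ← hmp.measure_preimage]
  · rfl
  · measurability

def columnsLinearMap (u v : ℝ²) : ℝ² →ₗ[ℝ] ℝ² := Matrix.toLpLin 2 2 !![u 0, v 0; u 1, v 1]

lemma det_columnsLinearMap (u v : ℝ²) : LinearMap.det (columnsLinearMap u v) = cross u v := by
  rw [columnsLinearMap, Matrix.toLpLin_eq_toLin, LinearMap.det_toLin, Matrix.det_fin_two_of, cross]
  ring

lemma image_columnsLinearMap (u v : ℝ²) :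
    columnsLinearMap u v '' {0, EuclideanSpace.single 0 1, EuclideanSpace.single 1 1}
      = {0, u, v} := by
  have h0 : columnsLinearMap u v (EuclideanSpace.single 0 1) = u := by
    ext i; fin_cases i <;> simp [columnsLinearMap]
  have h1 : columnsLinearMap u v (EuclideanSpace.single 1 1) = v := by
    ext i; fin_cases i <;> simp [columnsLinearMap]
  rw [Set.image_insert_eq, Set.image_insert_eq, Set.image_singleton, map_zero, h0, h1]

lemma volume_convexHull_zero (u v : ℝ²) :
    volume (convexHull ℝ {0, u, v}) = ENNReal.ofReal (|cross u v| / 2) := by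
  rw [← image_columnsLinearMap, ← LinearMap.image_convexHull, convexHull_zero_single_single,
    Measure.addHaar_image_linearMap, det_columnsLinearMap, volume_stdTriangle,
    ← ENNReal.ofReal_mul (abs_nonneg _), mul_one_div]

lemma volume_convexHull_triangle (A B C : ℝ²) :
    volume (convexHull ℝ {A, B, C}) = ENNReal.ofReal (|cross (B - A) (C - A)| / 2) := by
  have h : ({A, B, C} : Set ℝ²) = A +ᵥ ({0, B - A, C - A} : Set ℝ²) := by
    simp only [← Set.image_vadd, Set.image_insert_eq, Set.image_singleton, vadd_eq_add,
      add_zero, add_sub_cancel]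
  rw [h, convexHull_vadd, measure_vadd, volume_convexHull_zero]

lemma cross_sub_le_of_coords (a₁ a₂ b₁ b₂ c₁ c₂ : ℝ) :
    (b₁ - a₁) * (c₂ - a₂) - (b₂ - a₂) * (c₁ - a₁)
      ≤ √3 / 2 * (a₁ ^ 2 + a₂ ^ 2 + b₁ ^ 2 + b₂ ^ 2 + c₁ ^ 2 + c₂ ^ 2) := by
  set s := √3
  have hs : s ^ 2 = 3 := Real.sq_sqrt (by norm_num)
  have hsos : s / 2 * (a₁ ^ 2 + a₂ ^ 2 + b₁ ^ 2 + b₂ ^ 2 + c₁ ^ 2 + c₂ ^ 2)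
        - ((b₁ - a₁) * (c₂ - a₂) - (b₂ - a₂) * (c₁ - a₁))
      = s / 6 * ((a₁ + b₁ + c₁) ^ 2 + (a₂ + b₂ + c₂) ^ 2)
        + s / 3 * ((a₁ - b₁ / 2 - s / 2 * b₂ - c₁ / 2 + s / 2 * c₂) ^ 2
          + (a₂ + s / 2 * b₁ - b₂ / 2 - s / 2 * c₁ - c₂ / 2) ^ 2) := by
    linear_combination (1 / 3 * (b₁ * c₂ - b₂ * c₁ + a₂ * c₁ - a₂ * b₁ - a₁ * c₂ + a₁ * b₂)
      - s / 12 * ((b₁ - c₁) ^ 2 + (b₂ - c₂) ^ 2)) * hs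
  have hsos_nonneg : 0 ≤ s / 6 * ((a₁ + b₁ + c₁) ^ 2 + (a₂ + b₂ + c₂) ^ 2)
        + s / 3 * ((a₁ - b₁ / 2 - s / 2 * b₂ - c₁ / 2 + s / 2 * c₂) ^ 2
          + (a₂ + s / 2 * b₁ - b₂ / 2 - s / 2 * c₁ - c₂ / 2) ^ 2) := by
    positivity
  linarith

lemma cross_sub_le (a b c : ℝ²) :
    cross (b - a) (c - a) ≤ √3 / 2 * (‖a‖ ^ 2 + ‖b‖ ^ 2 + ‖c‖ ^ 2) := by
  simp only [EuclideanSpace.real_norm_sq_eq, Fin.sum_univ_two, cross, PiLp.sub_apply]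
  linarith [cross_sub_le_of_coords (a 0) (a 1) (b 0) (b 1) (c 0) (c 1)]

lemma abs_cross_sub_le {a b c : ℝ²} {ρ : ℝ} (ha : ‖a‖ ≤ ρ) (hb : ‖b‖ ≤ ρ) (hc : ‖c‖ ≤ ρ) :
    |cross (b - a) (c - a)| ≤ 3 * √3 / 2 * ρ ^ 2 := by
  have hsq {x : ℝ²} (hx : ‖x‖ ≤ ρ) : ‖x‖ ^ 2 ≤ ρ ^ 2 := pow_le_pow_left₀ (norm_nonneg x) hx 2
  have hsum : √3 / 2 * (‖a‖ ^ 2 + ‖b‖ ^ 2 + ‖c‖ ^ 2) ≤ 3 * √3 / 2 * ρ ^ 2 := by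
    nlinarith [hsq ha, hsq hb, hsq hc, Real.sqrt_nonneg 3]
  have hswap : cross (c - a) (b - a) = -cross (b - a) (c - a) := by
    unfold cross
    ring
  refine abs_le.2 ⟨?_, (cross_sub_le a b c).trans hsum⟩
  linarith [cross_sub_le a c b]

def equilateralVertex : Fin 3 → ℝ² :=
  ![!₂[0, 1], !₂[-(√3 / 2), -(1 / 2)], !₂[√3 / 2, -(1 / 2)]]

lemma norm_equilateralVertex (i : Fin 3) : ‖equilateralVertex i‖ = 1 := by
  rw [EuclideanSpace.norm_eq, Real.sqrt_eq_one, Fin.sum_univ_two]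
  fin_cases i <;> norm_num [equilateralVertex, div_pow]

lemma dist_equilateralVertex {i j : Fin 3} (hij : i ≠ j) :
    dist (equilateralVertex i) (equilateralVertex j) = √3 := by
  rw [← sq_eq_sq₀ dist_nonneg (Real.sqrt_nonneg 3), EuclideanSpace.dist_eq,
    Real.sq_sqrt (by positivity), Fin.sum_univ_two]
  revert hij
  fin_cases i <;> fin_cases j <;>
    norm_num [equilateralVertex, Real.dist_eq, div_pow, neg_sub_left, add_halves]

lemma cross_equilateralVertex :
    cross (equilateralVertex 1 - equilateralVertex 0) (equilateralVertex 2 - equilateralVertex 0)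
      = 3 * √3 / 2 := by
  simp only [cross, equilateralVertex, Fin.isValue, Matrix.cons_val, PiLp.sub_apply]
  ring

lemma add_smul_mem_closedBall (c : ℝ²) {ρ : ℝ} (hρ : 0 ≤ ρ) {p : ℝ²} (hp : ‖p‖ = 1) :
    c + ρ • p ∈ closedBall c ρ := by
  rw [mem_closedBall_iff_norm, add_sub_cancel_left, norm_smul, Real.norm_of_nonneg hρ, hp, mul_one]

lemma dist_add_smul_add_smul (c p q : ℝ²) {ρ : ℝ} (hρ : 0 ≤ ρ) :
    dist (c + ρ • p) (c + ρ • q) = ρ * dist p q := by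
  rw [dist_add_left, dist_smul₀, Real.norm_of_nonneg hρ]

end

theorem max_area_triangle_in_disk (c : EuclideanSpace ℝ (Fin 2)) (ρ : ℝ) (hρ : 0 < ρ) :
    (∀ A B C : EuclideanSpace ℝ (Fin 2),
      A ∈ Metric.closedBall c ρ → B ∈ Metric.closedBall c ρ → C ∈ Metric.closedBall c ρ →
      volume (convexHull ℝ {A, B, C}) ≤ ENNReal.ofReal ((3 * Real.sqrt 3 / 4) * ρ ^ 2)) ∧
    (∃ A B C : EuclideanSpace ℝ (Fin 2),
      A ∈ Metric.closedBall c ρ ∧ B ∈ Metric.closedBall c ρ ∧ C ∈ Metric.closedBall c ρ ∧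
      dist A B = ρ * Real.sqrt 3 ∧ dist B C = ρ * Real.sqrt 3 ∧ dist A C = ρ * Real.sqrt 3 ∧
      volume (convexHull ℝ {A, B, C}) = ENNReal.ofReal ((3 * Real.sqrt 3 / 4) * ρ ^ 2)) := by
  constructor
  · intro A B C hA hB hC
    rw [mem_closedBall_iff_norm] at hA hB hC
    rw [volume_convexHull_triangle, ← sub_sub_sub_cancel_right B A c,
      ← sub_sub_sub_cancel_right C A c]
    refine ENNReal.ofReal_le_ofReal ?_
    linarith [abs_cross_sub_le hA hB hC]
  · let v := equilateralVertex
    refine ⟨c + ρ • v 0, c + ρ • v 1, c + ρ • v 2, ?_, ?_, ?_, ?_, ?_, ?_, ?_⟩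
    iterate 3 exact add_smul_mem_closedBall c hρ.le (norm_equilateralVertex _)
    iterate 3 rw [dist_add_smul_add_smul c _ _ hρ.le, dist_equilateralVertex (by decide)]
    rw [volume_convexHull_triangle, add_sub_add_left_eq_sub, add_sub_add_left_eq_sub,
      ← smul_sub, ← smul_sub, cross_smul_smul, cross_equilateralVertex,
      abs_of_nonneg (by positivity)]
    congr 1
    ring
end

section
/- Let S ⊆ ℝ² be a measurable T(3,2)-set that is symmetric about the origin (x ∈ S implies −x ∈ S) with diameter δ > 4/√3. Then λ₂(S) ≤ min{ πδ²/6 + 4π/9 , 2π }. -/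
open MeasureTheory Metric Real

/-!
Write `rayMass K θ = ∫_{r > 0, (r cos θ, r sin θ) ∈ K} r dr`. In polar coordinates `λ₂(K)` is the integral
of the `2π`-periodic function `rayMass K` over a period, and `rayMass K θ ≤ ρ² / 2` when the ray in
direction `θ` meets `K` only within radius `ρ`. Being symmetric, `S` lies in the disk of radius
`δ / 2`.

Three points of norm `> 2 / √3` at mutual angles `2π / 3` are pairwise more than `2` apart, so of
any three directions at mutual angles `2π / 3` one meets `S` only within radius `2 / √3`;
averaging over rotations gives the first bound.

For the bound `2π`: if some `x ∈ S` has `‖x‖ > 2`, every point of `S` is more than `2` away from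
`x` or from `-x`, and each of these two parts has diameter at most `2`, hence area at most `π` by
the isodiametric inequality. Otherwise orthogonal `x, y ∈ S` satisfy `‖x‖² + ‖y‖² ≤ 4`, so
`rayMass S θ + rayMass S (θ + π / 2) ≤ 2`, and averaging again gives `2π`.
-/

open Set
open scoped ENNReal RealInnerProductSpace

namespace Function.Periodic

variable {f : ℝ → ℝ≥0∞} {T : ℝ}

theorem setLIntegral_Ioc_add_eq (hf : Periodic f T) (hT : 0 < T) (t s : ℝ) :
    ∫⁻ x in Ioc t (t + T), f x = ∫⁻ x in Ioc s (s + T), f x :=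
  (isAddFundamentalDomain_Ioc hT t).setLIntegral_eq (isAddFundamentalDomain_Ioc hT s) f
    fun ⟨_, k, hk⟩ x => by simpa [← hk, add_comm] using hf.zsmul k x

theorem setLIntegral_Ioc_comp_add (hf : Periodic f T) (hT : 0 < T) (c : ℝ) :
    ∫⁻ x in Ioc 0 T, f (x + c) = ∫⁻ x in Ioc 0 T, f x := by
  have hshift := (measurePreserving_add_right volume c).setLIntegral_comp_preimage_emb
    (measurableEmbedding_addRight c) f (Ioc c (c + T))
  rw [preimage_add_const_Ioc, sub_self, add_sub_cancel_left] at hshift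
  rw [hshift, hf.setLIntegral_Ioc_add_eq hT c 0, zero_add]

theorem setLIntegral_Ioc_le_of_sum_comp_add_le (hf : Periodic f T) (hT : 0 < T)
    (hfm : Measurable f) {n : ℕ} (hn : 0 < n) (c : Fin n → ℝ) {m : ℝ}
    (hm : ∀ x, ∑ i, f (x + c i) ≤ ENNReal.ofReal m) :
    ∫⁻ x in Ioc 0 T, f x ≤ ENNReal.ofReal (m * T / n) := by
  have hsum : n * ∫⁻ x in Ioc 0 T, f x ≤ ENNReal.ofReal (m * T) :=
    calc n * ∫⁻ x in Ioc 0 T, f x = ∑ i, ∫⁻ x in Ioc 0 T, f (x + c i) := by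
          simp [hf.setLIntegral_Ioc_comp_add hT]
      _ = ∫⁻ x in Ioc 0 T, ∑ i, f (x + c i) :=
          (lintegral_finsetSum _ fun i _ => hfm.comp (measurable_add_const _)).symm
      _ ≤ ∫⁻ _ in Ioc 0 T, ENNReal.ofReal m := lintegral_mono hm
      _ = ENNReal.ofReal (m * T) := by
          rw [setLIntegral_const, Real.volume_Ioc, sub_zero, ← ENNReal.ofReal_mul' hT.le]
  have hn' : (0 : ℝ) < n := Nat.cast_pos.mpr hn
  rw [ENNReal.ofReal_div_of_pos hn', ENNReal.ofReal_natCast,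
    ENNReal.le_div_iff_mul_le (by simp [hn.ne']) (by simp), mul_comm]
  exact hsum

end Function.Periodic

theorem setLIntegral_ofReal_Ioc {c : ℝ} (hc : 0 ≤ c) :
    ∫⁻ r in Ioc 0 c, ENNReal.ofReal r = ENNReal.ofReal (c ^ 2 / 2) := by
  rw [← ofReal_integral_eq_lintegral_ofReal, ← intervalIntegral.integral_of_le hc, integral_id]
  · ring_nf
  · exact (intervalIntegral.intervalIntegrable_id).1
  · filter_upwards [ae_restrict_mem measurableSet_Ioc] with r hr using hr.1.le

theorem setLIntegral_ofReal_le_of_subset_Ioc {A : Set ℝ} {c : ℝ} (hc : 0 ≤ c)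
    (hA : A ⊆ Ioc 0 c) : ∫⁻ r in A, ENNReal.ofReal r ≤ ENNReal.ofReal (c ^ 2 / 2) :=
  (lintegral_mono_set hA).trans_eq (setLIntegral_ofReal_Ioc hc)

theorem setLIntegral_ofReal_add_le_of_sq_add_sq_le {A B : Set ℝ} {d : ℝ} (hd : 0 ≤ d)
    (hA : A ⊆ Ioc 0 d) (hB : B ⊆ Ioc 0 d) (hAB : ∀ r ∈ A, ∀ s ∈ B, r ^ 2 + s ^ 2 ≤ d ^ 2) :
    (∫⁻ r in A, ENNReal.ofReal r) + ∫⁻ s in B, ENNReal.ofReal s ≤ ENNReal.ofReal (d ^ 2 / 2) := by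
  rcases A.eq_empty_or_nonempty with rfl | hne
  · simpa using setLIntegral_ofReal_le_of_subset_Ioc hd hB
  have hbdd : BddAbove A := ⟨d, fun r hr => (hA hr).2⟩
  set a := sSup A
  have ha : 0 ≤ a := (hA hne.some_mem).1.le.trans (le_csSup hbdd hne.some_mem)
  have had : a ≤ d := csSup_le hne fun r hr => (hA hr).2
  have hA' : A ⊆ Ioc 0 a := fun r hr => ⟨(hA hr).1, le_csSup hbdd hr⟩
  have hB' : B ⊆ Ioc 0 √(d ^ 2 - a ^ 2) := by
    intro s hs
    refine ⟨(hB hs).1, le_sqrt_of_sq_le ?_⟩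
    have : a ≤ √(d ^ 2 - s ^ 2) :=
      csSup_le hne fun r hr => le_sqrt_of_sq_le (by linarith [hAB r hr s hs])
    have := pow_le_pow_left₀ ha this 2
    rw [sq_sqrt (by nlinarith [(hB hs).1, (hB hs).2])] at this
    linarith
  calc (∫⁻ r in A, ENNReal.ofReal r) + ∫⁻ s in B, ENNReal.ofReal s
      ≤ ENNReal.ofReal (a ^ 2 / 2) + ENNReal.ofReal (√(d ^ 2 - a ^ 2) ^ 2 / 2) :=
        add_le_add (setLIntegral_ofReal_le_of_subset_Ioc ha hA')
          (setLIntegral_ofReal_le_of_subset_Ioc (sqrt_nonneg _) hB')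
    _ = ENNReal.ofReal (d ^ 2 / 2) := by
        rw [sq_sqrt (by nlinarith), ← ENNReal.ofReal_add (by positivity) (by nlinarith)]
        ring_nf

theorem dist_self_neg {E : Type*} [SeminormedAddCommGroup E] [NormedSpace ℝ E] (x : E) :
    dist x (-x) = 2 * ‖x‖ := by
  rw [dist_eq_norm, sub_neg_eq_add, ← two_smul ℝ, norm_smul, Real.norm_two]

noncomputable def polarPoint (r θ : ℝ) : EuclideanSpace ℝ (Fin 2) := !₂[r * cos θ, r * sin θ]

theorem continuous_polarPoint : Continuous fun p : ℝ × ℝ => polarPoint p.1 p.2 := by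
  unfold polarPoint
  fun_prop

theorem inner_polarPoint (r θ s φ : ℝ) :
    ⟪polarPoint r θ, polarPoint s φ⟫ = r * s * cos (θ - φ) := by
  simp only [polarPoint, EuclideanSpace.inner_eq_star_dotProduct, star_trivial,
    Matrix.dotProduct_cons, Matrix.head_cons, Matrix.tail_cons, Matrix.dotProduct_of_isEmpty,
    add_zero, cos_sub]
  ring

theorem norm_polarPoint (r θ : ℝ) : ‖polarPoint r θ‖ = |r| := by
  rw [EuclideanSpace.norm_eq, Fin.sum_univ_two]
  simp [polarPoint, mul_pow, ← mul_add, cos_sq_add_sin_sq, sqrt_sq_eq_abs]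

theorem dist_polarPoint_sq (r θ s φ : ℝ) :
    dist (polarPoint r θ) (polarPoint s φ) ^ 2 = r ^ 2 + s ^ 2 - 2 * r * s * cos (θ - φ) := by
  rw [dist_eq_norm, norm_sub_sq_real, inner_polarPoint, norm_polarPoint, norm_polarPoint, sq_abs,
    sq_abs]
  ring

theorem polarPoint_add_two_pi (r θ : ℝ) : polarPoint r (θ + 2 * π) = polarPoint r θ := by
  simp [polarPoint]

/-- For a star-shaped `K` this is `ρ(θ)² / 2`, where `ρ` is the radial function of `K`. -/
noncomputable def rayMass (K : Set (EuclideanSpace ℝ (Fin 2))) (θ : ℝ) : ℝ≥0∞ :=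
  ∫⁻ r in Ioi 0 ∩ (polarPoint · θ) ⁻¹' K, ENNReal.ofReal r

section rayMass

variable {K : Set (EuclideanSpace ℝ (Fin 2))}

theorem rayMass_periodic (K : Set (EuclideanSpace ℝ (Fin 2))) :
    Function.Periodic (rayMass K) (2 * π) := by
  intro θ
  simp only [rayMass, polarPoint_add_two_pi]

theorem rayMass_eq_lintegral (hK : MeasurableSet K) (θ : ℝ) :
    rayMass K θ = ∫⁻ r in Ioi 0, ENNReal.ofReal r * K.indicator 1 (polarPoint r θ) := by
  have hmeas : MeasurableSet ((polarPoint · θ) ⁻¹' K) :=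
    hK.preimage (continuous_polarPoint.comp (Continuous.prodMk_left θ)).measurable
  rw [rayMass, inter_comm, ← setLIntegral_indicator hmeas]
  congr 1 with r
  by_cases hr : polarPoint r θ ∈ K <;> simp [hr]

theorem measurable_rayMass (hK : MeasurableSet K) : Measurable (rayMass K) := by
  rw [show rayMass K = _ from funext (rayMass_eq_lintegral hK)]
  refine Measurable.lintegral_prod_right (f := fun θ r =>
    ENNReal.ofReal r * K.indicator 1 (polarPoint r θ)) ?_
  exact (ENNReal.measurable_ofReal.comp measurable_snd).mul
    ((measurable_one.indicator hK).comp (continuous_polarPoint.comp continuous_swap).measurable)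

theorem volume_eq_setLIntegral_Ioo_rayMass (hK : MeasurableSet K) :
    volume K = ∫⁻ θ in Ioo (-π) π, rayMass K θ := by
  let e : EuclideanSpace ℝ (Fin 2) ≃ᵐ ℝ × ℝ :=
    (MeasurableEquiv.toLp 2 (Fin 2 → ℝ)).symm.trans MeasurableEquiv.finTwoArrow
  have he : MeasurePreserving e.symm volume volume :=
    ((volume_preserving_finTwoArrow ℝ).comp
      (EuclideanSpace.volume_preserving_symm_measurableEquiv_toLp (Fin 2))).symm e
  have hpolar : ∀ p : ℝ × ℝ, e.symm (polarCoord.symm p) = polarPoint p.1 p.2 := by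
    intro p; ext i; fin_cases i <;> rfl
  have hF : Measurable fun p : ℝ × ℝ => ENNReal.ofReal p.1 * K.indicator 1 (polarPoint p.1 p.2) :=
    (ENNReal.measurable_ofReal.comp measurable_fst).mul
      ((measurable_one.indicator hK).comp continuous_polarPoint.measurable)
  calc volume K = ∫⁻ x, K.indicator 1 x := (lintegral_indicator_one hK).symm
    _ = ∫⁻ q, K.indicator 1 (e.symm q) := (he.lintegral_comp_emb e.symm.measurableEmbedding _).symm
    _ = ∫⁻ p in polarCoord.target, ENNReal.ofReal p.1 * K.indicator 1 (polarPoint p.1 p.2) := by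
      rw [← lintegral_comp_polarCoord_symm]
      simp only [hpolar, smul_eq_mul]
    _ = ∫⁻ θ in Ioo (-π) π, ∫⁻ r in Ioi 0, ENNReal.ofReal r * K.indicator 1 (polarPoint r θ) := by
      rw [polarCoord_target, Measure.volume_eq_prod, ← Measure.prod_restrict,
        lintegral_prod_symm _ hF.aemeasurable]
    _ = ∫⁻ θ in Ioo (-π) π, rayMass K θ := by
      simp only [rayMass_eq_lintegral hK]

theorem volume_eq_setLIntegral_Ioc_rayMass (hK : MeasurableSet K) :
    volume K = ∫⁻ θ in Ioc 0 (2 * π), rayMass K θ := by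
  have hfund := (rayMass_periodic K).setLIntegral_Ioc_add_eq two_pi_pos (-π) 0
  rwa [show -π + 2 * π = π by ring, zero_add, ← setLIntegral_congr Ioo_ae_eq_Ioc,
    ← volume_eq_setLIntegral_Ioo_rayMass hK] at hfund

theorem rayMass_le {θ c : ℝ} (hc : 0 ≤ c) (h : ∀ r, 0 < r → polarPoint r θ ∈ K → r ≤ c) :
    rayMass K θ ≤ ENNReal.ofReal (c ^ 2 / 2) :=
  setLIntegral_ofReal_le_of_subset_Ioc hc fun r hr => ⟨hr.1, h r hr.1 hr.2⟩

theorem rayMass_add_rayMass_add_pi_div_two_le {d : ℝ} (hd : 0 ≤ d) (hK : ∀ x ∈ K, ‖x‖ ≤ d)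
    (horth : ∀ x ∈ K, ∀ y ∈ K, ⟪x, y⟫ = 0 → ‖x‖ ^ 2 + ‖y‖ ^ 2 ≤ d ^ 2) (θ : ℝ) :
    rayMass K θ + rayMass K (θ + π / 2) ≤ ENNReal.ofReal (d ^ 2 / 2) := by
  have hray : ∀ φ, Ioi 0 ∩ (polarPoint · φ) ⁻¹' K ⊆ Ioc 0 d := fun φ r hr =>
    ⟨hr.1, by simpa [norm_polarPoint, abs_of_pos (mem_Ioi.1 hr.1)] using hK _ hr.2⟩
  refine setLIntegral_ofReal_add_le_of_sq_add_sq_le hd (hray θ) (hray _) fun r hr s hs => ?_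
  have := horth _ hr.2 _ hs.2 (by simp [inner_polarPoint])
  rwa [norm_polarPoint, norm_polarPoint, sq_abs, sq_abs] at this

end rayMass

section Isodiametric

variable {d : ℝ}

/-- With `0 ∈ W` and `W` in the upper half-plane, only the directions in `[0, π)` carry mass, and
perpendicular rays from `0` carry at most `d² / 2` together. -/
theorem volume_le_of_forall_dist_le_of_zero_mem_of_nonneg {W : Set (EuclideanSpace ℝ (Fin 2))}
    (hW : MeasurableSet W) (h0 : 0 ∈ W) (hup : ∀ x ∈ W, 0 ≤ x 1)
    (hd : ∀ x ∈ W, ∀ y ∈ W, dist x y ≤ d) :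
    volume W ≤ ENNReal.ofReal (π / 4 * d ^ 2) := by
  have hd0 : 0 ≤ d := by simpa using hd 0 h0 0 h0
  have hnorm : ∀ x ∈ W, ‖x‖ ≤ d := fun x hx => by simpa using hd x hx 0 h0
  have horth : ∀ x ∈ W, ∀ y ∈ W, ⟪x, y⟫ = 0 → ‖x‖ ^ 2 + ‖y‖ ^ 2 ≤ d ^ 2 := by
    intro x hx y hy hxy
    have := pow_le_pow_left₀ dist_nonneg (hd x hx y hy) 2
    rwa [dist_eq_norm, norm_sub_sq_real, hxy, mul_zero, sub_zero] at this
  have hlower : ∀ θ ∈ Ioo (-π) 0, rayMass W θ = 0 := by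
    intro θ hθ
    have hempty : Ioi 0 ∩ (polarPoint · θ) ⁻¹' W = ∅ := by
      refine eq_empty_of_forall_notMem fun r ⟨hr, hrW⟩ => ?_
      have := hup _ hrW
      simp only [polarPoint, Matrix.cons_val_one, Matrix.cons_val_fin_one] at this
      nlinarith [mem_Ioi.1 hr, sin_neg_of_neg_of_neg_pi_lt hθ.2 hθ.1]
    simp [rayMass, hempty]
  have hshift : ∫⁻ θ in Ico (π / 2) π, rayMass W θ
      = ∫⁻ θ in Ico 0 (π / 2), rayMass W (θ + π / 2) := by
    have := (measurePreserving_add_right volume (π / 2)).setLIntegral_comp_preimage_emb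
      (measurableEmbedding_addRight (π / 2)) (rayMass W) (Ico (π / 2) π)
    rwa [preimage_add_const_Ico, sub_self, sub_half, eq_comm] at this
  calc volume W = (∫⁻ θ in Ico 0 (π / 2), rayMass W θ)
        + ∫⁻ θ in Ico 0 (π / 2), rayMass W (θ + π / 2) := by
        rw [volume_eq_setLIntegral_Ioo_rayMass hW,
          ← Ioo_union_Ico_eq_Ioo (neg_lt_zero.2 pi_pos) pi_pos.le,
          lintegral_union measurableSet_Ico (Ico_disjoint_Ico_same.mono_left Ioo_subset_Ico_self),
          setLIntegral_congr_fun measurableSet_Ioo hlower, lintegral_zero, zero_add,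
          ← Ico_union_Ico_eq_Ico (b := π / 2) (by positivity) (by linarith [pi_pos]),
          lintegral_union measurableSet_Ico Ico_disjoint_Ico_same, hshift]
    _ ≤ ∫⁻ θ in Ico 0 (π / 2), (rayMass W θ + rayMass W (θ + π / 2)) := le_lintegral_add _ _
    _ ≤ ∫⁻ _ in Ico 0 (π / 2), ENNReal.ofReal (d ^ 2 / 2) :=
        lintegral_mono (rayMass_add_rayMass_add_pi_div_two_le hd0 hnorm horth)
    _ = ENNReal.ofReal (π / 4 * d ^ 2) := by
        rw [setLIntegral_const, Real.volume_Ico, sub_zero, ← ENNReal.ofReal_mul (by positivity)]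
        ring_nf

/-- The isodiametric inequality in the plane. -/
theorem volume_le_pi_div_four_mul_sq {U : Set (EuclideanSpace ℝ (Fin 2))}
    (hd : ∀ x ∈ U, ∀ y ∈ U, dist x y ≤ d) : volume U ≤ ENNReal.ofReal (π / 4 * d ^ 2) := by
  rcases U.eq_empty_or_nonempty with rfl | hne
  · simp
  have hd0 : 0 ≤ d := by simpa using hd _ hne.some_mem _ hne.some_mem
  have hV : IsCompact (closure U) := (isBounded_iff.2 ⟨d, hd⟩).isCompact_closure
  have hdV : ∀ x ∈ closure U, ∀ y ∈ closure U, dist x y ≤ d := fun x hx y hy =>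
    (dist_le_diam_of_mem hV.isBounded hx hy).trans
      ((diam_closure U).trans_le (diam_le_of_forall_dist_le hd0 hd))
  obtain ⟨o, ho, hmin⟩ := hV.exists_isMinOn hne.closure
    (continuous_apply 1 |>.comp (PiLp.continuous_ofLp 2 _)).continuousOn
  calc volume U ≤ volume (closure U) := measure_mono subset_closure
    _ = volume ((· + o) ⁻¹' closure U) := (measure_preimage_add_right _ _ _).symm
    _ ≤ ENNReal.ofReal (π / 4 * d ^ 2) := by
      refine volume_le_of_forall_dist_le_of_zero_mem_of_nonneg
        (isClosed_closure.measurableSet.preimage (measurable_add_const o)) (by simpa using ho)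
        (fun x hx => ?_) (fun x hx y hy => ?_)
      · simpa using hmin hx
      · simpa using hdV _ hx _ hy

end Isodiametric

theorem two_lt_dist_polarPoint {r s θ φ : ℝ} (hr : 2 / √3 < r) (hs : 2 / √3 < s)
    (hcos : cos (θ - φ) = -(1 / 2)) : 2 < dist (polarPoint r θ) (polarPoint s φ) := by
  have hc : (2 / √3) ^ 2 = 4 / 3 := by rw [div_pow, sq_sqrt zero_le_three]; norm_num
  have hc0 : 0 < 2 / √3 := by positivity
  refine lt_of_pow_lt_pow_left₀ 2 dist_nonneg ?_
  rw [dist_polarPoint_sq, hcos]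
  nlinarith [mul_lt_mul'' hr hs hc0.le hc0.le]

section IsT32Set

variable {K : Set (EuclideanSpace ℝ (Fin 2))}

theorem IsT32Set.dist_le_two_of_two_lt_dist (hT : IsT32Set K) {p q x : EuclideanSpace ℝ (Fin 2)}
    (hp : p ∈ K) (hq : q ∈ K) (hx : x ∈ K) (hpx : 2 < dist p x) (hqx : 2 < dist q x) :
    dist p q ≤ 2 := by
  rcases hT p hp q hq x hx with h | h | h
  · exact h
  · linarith
  · linarith

/-- A point of norm `> 1` is more than `2` away from its antipode, so every other point is within
`2` of one of the two. -/
theorem IsT32Set.norm_sq_add_norm_sq_le_four (hT : IsT32Set K) (hsym : ∀ x ∈ K, -x ∈ K)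
    {x y : EuclideanSpace ℝ (Fin 2)} (hx : x ∈ K) (hy : y ∈ K) (hxy : ⟪x, y⟫ = 0) :
    ‖x‖ ^ 2 + ‖y‖ ^ 2 ≤ 4 := by
  have key : ∀ x ∈ K, ∀ y ∈ K, ⟪x, y⟫ = 0 → 1 < ‖x‖ → ‖x‖ ^ 2 + ‖y‖ ^ 2 ≤ 4 := by
    intro x hx y hy hxy hx1
    have hyx : dist y x ^ 2 = ‖x‖ ^ 2 + ‖y‖ ^ 2 := by
      rw [dist_eq_norm, norm_sub_sq_real, real_inner_comm, hxy]; ring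
    have hyx' : dist y (-x) ^ 2 = ‖x‖ ^ 2 + ‖y‖ ^ 2 := by
      rw [dist_eq_norm, norm_sub_sq_real, inner_neg_right, real_inner_comm, hxy, norm_neg]; ring
    rcases hT y hy x hx (-x) (hsym x hx) with h | h | h
    · nlinarith [dist_nonneg (x := y) (y := x)]
    · linarith [dist_self_neg x]
    · nlinarith [dist_nonneg (x := y) (y := -x)]
  by_cases hx1 : 1 < ‖x‖
  · exact key x hx y hy hxy hx1
  by_cases hy1 : 1 < ‖y‖
  · linarith [key y hy x hx (by rwa [real_inner_comm]) hy1]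
  nlinarith [norm_nonneg x, norm_nonneg y]

theorem IsT32Set.volume_le_two_pi_of_norm_le_two (hT : IsT32Set K) (hsym : ∀ x ∈ K, -x ∈ K)
    (hK : MeasurableSet K) (hK2 : ∀ x ∈ K, ‖x‖ ≤ 2) : volume K ≤ ENNReal.ofReal (2 * π) := by
  have hpair (θ : ℝ) : rayMass K θ + rayMass K (θ + π / 2) ≤ ENNReal.ofReal 2 := by
    have := rayMass_add_rayMass_add_pi_div_two_le zero_le_two hK2 (fun x hx y hy hxy =>
      (hT.norm_sq_add_norm_sq_le_four hsym hx hy hxy).trans_eq (by norm_num)) θ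
    rwa [show (2 : ℝ) ^ 2 / 2 = 2 by norm_num] at this
  rw [volume_eq_setLIntegral_Ioc_rayMass hK]
  refine ((rayMass_periodic K).setLIntegral_Ioc_le_of_sum_comp_add_le two_pi_pos
    (measurable_rayMass hK) two_pos ![0, π / 2] (m := 2) fun θ => ?_).trans_eq ?_
  · simpa using hpair θ
  · congr 1
    push_cast
    ring

theorem IsT32Set.volume_le_two_pi (hT : IsT32Set K) (hsym : ∀ x ∈ K, -x ∈ K)
    (hK : MeasurableSet K) : volume K ≤ ENNReal.ofReal (2 * π) := by
  by_cases hK2 : ∀ x ∈ K, ‖x‖ ≤ 2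
  · exact hT.volume_le_two_pi_of_norm_le_two hsym hK hK2
  push Not at hK2
  obtain ⟨x, hx, hx2⟩ := hK2
  have hcover : K ⊆ {y ∈ K | 2 < dist y x} ∪ {y ∈ K | 2 < dist y (-x)} := by
    intro y hy
    by_cases h₁ : 2 < dist y x
    · exact Or.inl ⟨hy, h₁⟩
    refine Or.inr ⟨hy, ?_⟩
    by_contra h₂
    linarith [dist_self_neg x, dist_triangle_left x (-x) y, not_lt.1 h₁, not_lt.1 h₂]
  have hfar (z : EuclideanSpace ℝ (Fin 2)) (hz : z ∈ K) :
      volume {y ∈ K | 2 < dist y z} ≤ ENNReal.ofReal π := by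
    have := volume_le_pi_div_four_mul_sq (U := {y ∈ K | 2 < dist y z}) (d := 2)
      fun p hp q hq => hT.dist_le_two_of_two_lt_dist hp.1 hq.1 hz hp.2 hq.2
    rwa [show π / 4 * 2 ^ 2 = π by ring] at this
  calc volume K ≤ volume {y ∈ K | 2 < dist y x} + volume {y ∈ K | 2 < dist y (-x)} :=
        (measure_mono hcover).trans (measure_union_le _ _)
    _ ≤ ENNReal.ofReal π + ENNReal.ofReal π := add_le_add (hfar x hx) (hfar (-x) (hsym x hx))
    _ = ENNReal.ofReal (2 * π) := by rw [← ENNReal.ofReal_add pi_pos.le pi_pos.le, two_mul]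

theorem IsT32Set.exists_short_ray (hT : IsT32Set K) (θ : ℝ) :
    ∃ k ∈ ({0, 2 * π / 3, 4 * π / 3} : Set ℝ),
      ∀ r, 0 < r → polarPoint r (θ + k) ∈ K → r ≤ 2 / √3 := by
  by_contra! h
  obtain ⟨r₁, -, h₁, hr₁⟩ := h 0 (by simp)
  obtain ⟨r₂, -, h₂, hr₂⟩ := h (2 * π / 3) (by simp)
  obtain ⟨r₃, -, h₃, hr₃⟩ := h (4 * π / 3) (by simp)
  have hcos₁ : cos (2 * π / 3) = -(1 / 2) := by
    rw [show 2 * π / 3 = π - π / 3 by ring, cos_pi_sub, cos_pi_div_three]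
  have hcos₂ : cos (4 * π / 3) = -(1 / 2) := by
    rw [show 4 * π / 3 = π / 3 + π by ring, cos_add_pi, cos_pi_div_three]
  rcases hT _ h₁ _ h₂ _ h₃ with h | h | h
  · refine h.not_gt (two_lt_dist_polarPoint hr₁ hr₂ ?_)
    rw [← hcos₁, ← cos_neg]; ring_nf
  · refine h.not_gt (two_lt_dist_polarPoint hr₂ hr₃ ?_)
    rw [← hcos₁, ← cos_neg]; ring_nf
  · refine h.not_gt (two_lt_dist_polarPoint hr₁ hr₃ ?_)
    rw [← hcos₂, ← cos_neg]; ring_nf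

theorem IsT32Set.rayMass_add_rayMass_add_rayMass_le (hT : IsT32Set K) {R : ℝ} (hR : 2 / √3 ≤ R)
    (hKR : ∀ x ∈ K, ‖x‖ ≤ R) (θ : ℝ) :
    rayMass K θ + rayMass K (θ + 2 * π / 3) + rayMass K (θ + 4 * π / 3)
      ≤ ENNReal.ofReal (R ^ 2 + 2 / 3) := by
  have hR0 : 0 ≤ R := (by positivity : (0 : ℝ) ≤ 2 / √3).trans hR
  have hlong (φ : ℝ) : rayMass K φ ≤ ENNReal.ofReal (R ^ 2 / 2) :=
    rayMass_le hR0 fun r hr hrK => by simpa [norm_polarPoint, abs_of_pos hr] using hKR _ hrK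
  have hshort (φ : ℝ) (h : ∀ r, 0 < r → polarPoint r φ ∈ K → r ≤ 2 / √3) :
      rayMass K φ ≤ ENNReal.ofReal (2 / 3) := by
    have := rayMass_le (by positivity) h
    rwa [div_pow, sq_sqrt zero_le_three, show (2 : ℝ) ^ 2 / 3 / 2 = 2 / 3 by norm_num] at this
  have hsum {a b c : ℝ≥0∞} (ha : a ≤ ENNReal.ofReal (2 / 3)) (hb : b ≤ ENNReal.ofReal (R ^ 2 / 2))
      (hc : c ≤ ENNReal.ofReal (R ^ 2 / 2)) : a + b + c ≤ ENNReal.ofReal (R ^ 2 + 2 / 3) := by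
    calc a + b + c ≤ ENNReal.ofReal (2 / 3) + ENNReal.ofReal (R ^ 2 / 2)
          + ENNReal.ofReal (R ^ 2 / 2) := by gcongr
      _ = ENNReal.ofReal (R ^ 2 + 2 / 3) := by
          rw [← ENNReal.ofReal_add (by positivity) (by positivity),
            ← ENNReal.ofReal_add (by positivity) (by positivity)]
          ring_nf
  obtain ⟨k, hk, hk_short⟩ := hT.exists_short_ray θ
  rcases hk with rfl | rfl | rfl
  · rw [add_zero] at hk_short
    exact hsum (hshort _ hk_short) (hlong _) (hlong _)
  · rw [add_comm (rayMass K θ)]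
    exact hsum (hshort _ hk_short) (hlong _) (hlong _)
  · rw [add_comm, ← add_assoc]
    exact hsum (hshort _ hk_short) (hlong _) (hlong _)

theorem IsT32Set.volume_le_of_norm_le (hT : IsT32Set K) (hK : MeasurableSet K) {R : ℝ}
    (hR : 2 / √3 ≤ R) (hKR : ∀ x ∈ K, ‖x‖ ≤ R) :
    volume K ≤ ENNReal.ofReal (2 * π / 3 * R ^ 2 + 4 * π / 9) := by
  rw [volume_eq_setLIntegral_Ioc_rayMass hK]
  convert (rayMass_periodic K).setLIntegral_Ioc_le_of_sum_comp_add_le two_pi_pos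
    (measurable_rayMass hK) three_pos ![0, 2 * π / 3, 4 * π / 3]
    (fun θ => by simpa [Fin.sum_univ_three, add_assoc]
      using hT.rayMass_add_rayMass_add_rayMass_le hR hKR θ) using 2
  push_cast
  ring

end IsT32Set

theorem symmetric_T32_measure_bound (S : Set (EuclideanSpace ℝ (Fin 2))) (δ : ℝ)
    (hm : MeasurableSet S) (hT : IsT32Set S)
    (hsym : ∀ x ∈ S, -x ∈ S) (hdiam : Metric.diam S = δ)
    (hδ : 4 / Real.sqrt 3 < δ) :
    volume S ≤ ENNReal.ofReal (min (π * δ ^ 2 / 6 + 4 * π / 9) (2 * π)) := by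
  have hδ0 : 0 < δ := lt_trans (by positivity) hδ
  have hbdd : Bornology.IsBounded S := by
    by_contra hb
    rw [diam_eq_zero_of_unbounded hb] at hdiam
    exact hδ0.ne hdiam
  have hnorm : ∀ x ∈ S, ‖x‖ ≤ δ / 2 := fun x hx => by
    have := dist_le_diam_of_mem hbdd hx (hsym x hx)
    rw [dist_self_neg, hdiam] at this
    linarith
  have hR : 2 / √3 ≤ δ / 2 := by linarith [show 4 / √3 = 2 * (2 / √3) by ring]
  rcases min_choice (π * δ ^ 2 / 6 + 4 * π / 9) (2 * π) with h | h <;> rw [h]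
  · convert hT.volume_le_of_norm_le hm hR hnorm using 2
    ring
  · exact hT.volume_le_two_pi hsym hm
end
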